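/- arXiv:math/0403198 — 6 statements merged into one kernel-verified Lean document; each statement's English description precedes it below -/
import Mathlib

section
/- Let p be a prime or p = ∞. Assume E[|log|a₁|_p|] < ∞, E[log⁺|b₁|_p] < ∞ (with the convention log⁺|0|_p = 0), and that the p-drift φ_p = E[log|a₁|_p] is strictly negative. Then the infinite series Σ_{k=1}^∞ a₁⋯a_{k−1} b_k converges almost surely in ℚ_p. -/
/-!
By the strong law of large numbers, almost surely `(1/k) ∑_{j<k} log |a_j|_p → φ_p < 0` and
`(1/k) log⁺ |b_k|_p → 0`. Hence `|a₀⋯a_{k-1} b_k|_p ≤ exp (k φ_p / 2)` for all large `k`, so the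
series is dominated by a convergent geometric series and converges in the complete field.
-/

open MeasureTheory ProbabilityTheory Filter Topology Finset

lemma tendsto_div_natCast_zero_of_tendsto_average {u : ℕ → ℝ} {m : ℝ}
    (h : Tendsto (fun n : ℕ => (∑ i ∈ range n, u i) / n) atTop (𝓝 m)) :
    Tendsto (fun n : ℕ => u n / n) atTop (𝓝 0) := by
  have hshift : Tendsto (fun n : ℕ => (∑ i ∈ range (n + 1), u i) / (n + 1)) atTop (𝓝 m) := by
    simpa using (tendsto_add_atTop_iff_nat 1).mpr h
  have hratio : Tendsto (fun n : ℕ => ((n : ℝ) + 1) / n) atTop (𝓝 1) := by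
    simpa using tendsto_natCast_div_add_atTop (1 : ℝ) |>.inv₀ one_ne_zero
  have hlim := (hshift.mul hratio).sub h
  rw [mul_one, sub_self] at hlim
  refine hlim.congr' ?_
  filter_upwards [eventually_gt_atTop 0] with n hn
  have hn' : (n : ℝ) ≠ 0 := by positivity
  rw [sum_range_succ]
  field_simp
  ring

lemma summable_of_norm_le_exp_of_tendsto_div_neg {E : Type*} [NormedAddCommGroup E]
    [CompleteSpace E] {f : ℕ → E} {s : ℕ → ℝ} {φ : ℝ} (hf : ∀ k, ‖f k‖ ≤ Real.exp (s k))
    (hs : Tendsto (fun k : ℕ => s k / k) atTop (𝓝 φ)) (hφ : φ < 0) :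
    Summable f := by
  have hr : Real.exp (φ / 2) < 1 := Real.exp_lt_one_iff.mpr (by linarith)
  refine (summable_geometric_of_lt_one (Real.exp_pos _).le hr).of_norm_bounded_eventually_nat ?_
  filter_upwards [hs.eventually (eventually_lt_nhds (by linarith : φ < φ / 2)),
    eventually_gt_atTop 0] with k hk hk0
  have hk' : s k ≤ k * (φ / 2) := by
    rw [div_lt_iff₀ (by positivity)] at hk
    linarith
  calc ‖f k‖ ≤ Real.exp (s k) := hf k
    _ ≤ Real.exp (k * (φ / 2)) := Real.exp_le_exp.mpr hk'
    _ = Real.exp (φ / 2) ^ k := Real.exp_nat_mul _ _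

/-- Valid also when some factor vanishes, because `Real.log 0 = 0` makes `exp (log ‖0‖) = 1`. -/
lemma norm_prod_mul_le_exp {β K : Type*} [NormedField K] (s : Finset β) (x : β → K) (y : K) :
    ‖(∏ j ∈ s, x j) * y‖ ≤ Real.exp (∑ j ∈ s, Real.log ‖x j‖ + max (Real.log ‖y‖) 0) := by
  rw [norm_mul, norm_prod, Real.exp_add, Real.exp_sum]
  gcongr with j
  · exact Real.le_exp_log _
  · exact (Real.le_exp_log _).trans (Real.exp_le_exp.mpr (le_max_left _ _))

lemma strong_law_ae_comp {Ω α : Type*} [MeasurableSpace Ω] [MeasurableSpace α] {μ : Measure Ω}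
    {Z : ℕ → Ω → α} (hindep : iIndepFun Z μ) (hident : ∀ n, IdentDistrib (Z n) (Z 0) μ μ)
    {g : α → ℝ} (hg : Measurable g) (hint : Integrable (g ∘ Z 0) μ) :
    ∀ᵐ ω ∂μ, Tendsto (fun n : ℕ => (∑ i ∈ range n, g (Z i ω)) / n) atTop
      (𝓝 (∫ ω, g (Z 0 ω) ∂μ)) :=
  strong_law_ae_real (fun n => g ∘ Z n) hint
    (fun _ _ hij => (hindep.indepFun hij).comp hg hg) (fun n => (hident n).comp hg)

theorem statement0_general
    {Ω : Type*} [MeasureSpace Ω]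
    (a b : ℕ → Ω → ℚ)
    (hindep : iIndepFun (fun n ω => (a n ω, b n ω)) ℙ)
    (hident : ∀ n, IdentDistrib (fun ω => (a n ω, b n ω)) (fun ω => (a 0 ω, b 0 ω)) ℙ ℙ)
    {K : Type*} [NormedField K] [CompleteSpace K]
    (ι : ℚ →+* K)
    (hInta : Integrable (fun ω => Real.log ‖ι (a 0 ω)‖) ℙ)
    (hIntb : Integrable (fun ω => max (Real.log ‖ι (b 0 ω)‖) 0) ℙ)
    (hdrift : ∫ ω, Real.log ‖ι (a 0 ω)‖ ∂ℙ < 0) :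
    ∀ᵐ ω ∂ℙ, ∃ L : K,
      Tendsto (fun n => ι (∑ k ∈ Finset.range n, (∏ j ∈ Finset.range k, a j ω) * b k ω))
        atTop (𝓝 L) := by
  have hlawa := strong_law_ae_comp hindep hident
    (measurable_of_countable fun q : ℚ × ℚ => Real.log ‖ι q.1‖) hInta
  have hlawb := strong_law_ae_comp hindep hident
    (measurable_of_countable fun q : ℚ × ℚ => max (Real.log ‖ι q.2‖) 0) hIntb
  filter_upwards [hlawa, hlawb] with ω hωa hωb
  have hexponent : Tendsto (fun k : ℕ => (∑ j ∈ range k, Real.log ‖ι (a j ω)‖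
      + max (Real.log ‖ι (b k ω)‖) 0) / k) atTop (𝓝 (∫ ω, Real.log ‖ι (a 0 ω)‖ ∂ℙ)) := by
    simpa only [add_div, add_zero] using
      hωa.add (tendsto_div_natCast_zero_of_tendsto_average hωb)
  have hsum : Summable fun k => ι ((∏ j ∈ range k, a j ω) * b k ω) :=
    summable_of_norm_le_exp_of_tendsto_div_neg
      (fun k => by simpa only [map_mul, map_prod] using norm_prod_mul_le_exp _ _ _)
      hexponent hdrift
  exact ⟨_, by simpa only [map_sum] using hsum.hasSum.tendsto_sum_nat⟩

/-- Let `p` be a prime or `p = ∞`; the corresponding completion of `ℚ`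
is modelled by a complete normed field `K` together with a ring embedding `ι : ℚ →+* K`
with dense range, whose norm restricts on `ℚ` to the usual absolute value (`p = ∞`)
or to the `p`-adic absolute value for some prime `p`.  Given an i.i.d. sequence
`(aₙ, bₙ)` with values in `ℚ* × ℚ`, if `E[|log |a₁|_p|] < ∞`, `E[log⁺ |b₁|_p] < ∞`
and the drift `φ_p = E[log |a₁|_p]` is strictly negative, then the series
`Σ_{k≥1} a₁⋯a_{k-1} b_k` converges almost surely in `ℚ_p`. -/
theorem statement0
    {Ω : Type*} [MeasureSpace Ω] [IsProbabilityMeasure (ℙ : Measure Ω)]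
    (a b : ℕ → Ω → ℚ)
    (hmeas : ∀ n, Measurable fun ω => (a n ω, b n ω))
    (hindep : iIndepFun (fun n ω => (a n ω, b n ω)) ℙ)
    (hident : ∀ n, IdentDistrib (fun ω => (a n ω, b n ω)) (fun ω => (a 0 ω, b 0 ω)) ℙ ℙ)
    (hne : ∀ n ω, a n ω ≠ 0)
    {K : Type*} [NormedField K] [CompleteSpace K]
    (ι : ℚ →+* K) (hdense : DenseRange ι)
    (hplace : (∀ q : ℚ, ‖ι q‖ = |(q : ℝ)|) ∨
      ∃ p : ℕ, p.Prime ∧ ∀ q : ℚ, ‖ι q‖ = (padicNorm p q : ℝ))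
    (hInta : Integrable (fun ω => Real.log ‖ι (a 0 ω)‖) ℙ)
    (hIntb : Integrable (fun ω => max (Real.log ‖ι (b 0 ω)‖) 0) ℙ)
    (hdrift : ∫ ω, Real.log ‖ι (a 0 ω)‖ ∂ℙ < 0) :
    ∀ᵐ ω ∂ℙ, ∃ L : K,
      Tendsto (fun n => ι (∑ k ∈ Finset.range n, (∏ j ∈ Finset.range k, a j ω) * b k ω))
        atTop (𝓝 L) :=
  statement0_general a b hindep hident ι hInta hIntb hdrift
end

section
/- Let p be a prime or p = ∞. Assume E[|log|a₁|_p|] < ∞, E[log⁺|b₁|_p] < ∞, and φ_p = E[log|a₁|_p] < 0, and let Z_∞^p denote the almost sure limit in ℚ_p of Σ_{k=1}^n a₁⋯a_{k−1} b_k. Then almost surely, for every z ∈ ℚ_p, the orbit of z under the random walk converges to Z_∞^p: A_n z + B_n → Z_∞^p in ℚ_p as n → ∞. -/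
/-!
By the strong law of large numbers applied to `log |aₙ|_p`, whose mean is negative,
`log |A_n|_p = Σ_{k<n} log |a_k|_p → -∞` almost surely, so `A_n → 0` in `ℚ_p`. Hence
`A_n z + B_n` has the same limit as `B_n`, for every `z` at once.
-/

open MeasureTheory ProbabilityTheory Filter Topology Finset

theorem tendsto_atBot_of_tendsto_div_natCast_neg {S : ℕ → ℝ} {m : ℝ} (hm : m < 0)
    (hS : Tendsto (fun n : ℕ => S n / n) atTop (𝓝 m)) : Tendsto S atTop atBot := by
  refine (tendsto_natCast_atTop_atTop.atTop_mul_neg hm hS).congr' ?_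
  filter_upwards [eventually_ne_atTop 0] with n hn
  field_simp

theorem ae_tendsto_sum_atBot_of_integral_neg {Ω : Type*} [MeasurableSpace Ω] {μ : Measure Ω}
    (X : ℕ → Ω → ℝ) (hint : Integrable (X 0) μ) (hindep : Pairwise (Function.onFun (IndepFun · · μ) X))
    (hident : ∀ i, IdentDistrib (X i) (X 0) μ μ) (hneg : μ[X 0] < 0) :
    ∀ᵐ ω ∂μ, Tendsto (fun n => ∑ i ∈ range n, X i ω) atTop atBot := by
  filter_upwards [strong_law_ae_real X hint hindep hident] with ω hω
  exact tendsto_atBot_of_tendsto_div_natCast_neg hneg hω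

theorem tendsto_prod_zero_of_tendsto_sum_log_norm_atBot {K : Type*} [NormedField K]
    {c : ℕ → K} (hc : ∀ n, c n ≠ 0)
    (h : Tendsto (fun n => ∑ i ∈ range n, Real.log ‖c i‖) atTop atBot) :
    Tendsto (fun n => ∏ i ∈ range n, c i) atTop (𝓝 0) := by
  have hnorm : ∀ n, ‖∏ i ∈ range n, c i‖ = Real.exp (∑ i ∈ range n, Real.log ‖c i‖) := by
    intro n
    rw [Real.exp_sum, norm_prod]
    exact prod_congr rfl fun i _ => (Real.exp_log (norm_pos_iff.mpr (hc i))).symm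
  rw [tendsto_zero_iff_norm_tendsto_zero]
  exact (Real.tendsto_exp_atBot.comp h).congr fun n => (hnorm n).symm

theorem statement1_general
    {Ω : Type*} [MeasureSpace Ω]
    (a b : ℕ → Ω → ℚ)
    (hindep : iIndepFun (fun n ω => (a n ω, b n ω)) ℙ)
    (hident : ∀ n, IdentDistrib (fun ω => (a n ω, b n ω)) (fun ω => (a 0 ω, b 0 ω)) ℙ ℙ)
    (hne : ∀ n ω, a n ω ≠ 0)
    {K : Type*} [NormedField K]
    (ι : ℚ →+* K)
    (hInta : Integrable (fun ω => Real.log ‖ι (a 0 ω)‖) ℙ)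
    (hdrift : ∫ ω, Real.log ‖ι (a 0 ω)‖ ∂ℙ < 0)
    (Z : Ω → K)
    (hZ : ∀ᵐ ω ∂ℙ,
      Tendsto (fun n => ι (∑ k ∈ Finset.range n, (∏ j ∈ Finset.range k, a j ω) * b k ω))
        atTop (𝓝 (Z ω))) :
    ∀ᵐ ω ∂ℙ, ∀ z : K,
      Tendsto (fun n =>
          ι (∏ k ∈ Finset.range n, a k ω) * z
            + ι (∑ k ∈ Finset.range n, (∏ j ∈ Finset.range k, a j ω) * b k ω))
        atTop (𝓝 (Z ω)) := by
  set g : ℚ × ℚ → ℝ := fun ab => Real.log ‖ι ab.1‖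
  have hg : Measurable g :=
    (measurable_from_top (f := fun q : ℚ => Real.log ‖ι q‖)).comp measurable_fst
  have hlog_sum := ae_tendsto_sum_atBot_of_integral_neg (fun n ω => g (a n ω, b n ω)) hInta
    (fun i j hij => (hindep.comp (fun _ => g) (fun _ => hg)).indepFun hij)
    (fun n => (hident n).comp hg) hdrift
  filter_upwards [hlog_sum, hZ] with ω hω hZω z
  have hA : Tendsto (fun n => ι (∏ k ∈ range n, a k ω)) atTop (𝓝 0) := by
    simp only [map_prod]
    exact tendsto_prod_zero_of_tendsto_sum_log_norm_atBot
      (fun k => (map_ne_zero ι).mpr (hne k ω)) hω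
  simpa using (hA.mul_const z).add hZω

/-- With `K` a complete normed field realizing a place of `ℚ`
(a prime `p` or `p = ∞`) and `(aₙ, bₙ)` i.i.d. in `ℚ* × ℚ`, assume
`E[|log |a₁|_p|] < ∞`, `E[log⁺ |b₁|_p] < ∞` and `φ_p = E[log |a₁|_p] < 0`, and let
`Z_∞^p` be the a.s. limit of the partial sums `B_n = Σ_{k=1}^n a₁⋯a_{k-1} b_k` in `ℚ_p`.
Then almost surely, for every `z ∈ ℚ_p`, `A_n z + B_n → Z_∞^p`. -/
theorem statement1
    {Ω : Type*} [MeasureSpace Ω] [IsProbabilityMeasure (ℙ : Measure Ω)]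
    (a b : ℕ → Ω → ℚ)
    (hmeas : ∀ n, Measurable fun ω => (a n ω, b n ω))
    (hindep : iIndepFun (fun n ω => (a n ω, b n ω)) ℙ)
    (hident : ∀ n, IdentDistrib (fun ω => (a n ω, b n ω)) (fun ω => (a 0 ω, b 0 ω)) ℙ ℙ)
    (hne : ∀ n ω, a n ω ≠ 0)
    {K : Type*} [NormedField K] [CompleteSpace K]
    (ι : ℚ →+* K) (hdense : DenseRange ι)
    (hplace : (∀ q : ℚ, ‖ι q‖ = |(q : ℝ)|) ∨
      ∃ p : ℕ, p.Prime ∧ ∀ q : ℚ, ‖ι q‖ = (padicNorm p q : ℝ))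
    (hInta : Integrable (fun ω => Real.log ‖ι (a 0 ω)‖) ℙ)
    (hIntb : Integrable (fun ω => max (Real.log ‖ι (b 0 ω)‖) 0) ℙ)
    (hdrift : ∫ ω, Real.log ‖ι (a 0 ω)‖ ∂ℙ < 0)
    (Z : Ω → K)
    (hZ : ∀ᵐ ω ∂ℙ,
      Tendsto (fun n => ι (∑ k ∈ Finset.range n, (∏ j ∈ Finset.range k, a j ω) * b k ω))
        atTop (𝓝 (Z ω))) :
    ∀ᵐ ω ∂ℙ, ∀ z : K,
      Tendsto (fun n =>
          ι (∏ k ∈ Finset.range n, a k ω) * z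
            + ι (∑ k ∈ Finset.range n, (∏ j ∈ Finset.range k, a j ω) * b k ω))
        atTop (𝓝 (Z ω)) :=
  statement1_general a b hindep hident hne ι hInta hdrift Z hZ
end

section
/- Let p be a prime or p = ∞. Assume the law μ of (a₁,b₁) is nondegenerate, E[|log|a₁|_p|] < ∞, E[log⁺|b₁|_p] < ∞, and φ_p = E[log|a₁|_p] < 0. Then the law ν_p of the almost sure limit Z_∞^p = Σ_{k=1}^∞ a₁⋯a_{k−1} b_k in ℚ_p carries no point mass: ν_p({z}) = 0 for every z ∈ ℚ_p. -/
open MeasureTheory ProbabilityTheory Filter Topology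
open scoped ENNReal

/-!
Write `ν` for the law of `Z`. The limit satisfies `Z = a₀ Z' + b₀`, where `Z'` is the limit of the
shifted series: it has law `ν` and is independent of `(a₀, b₀)`, so
`ν {z} = E[ν {(z - b₀) / a₀}]`. If `ν` had an atom, the atoms of maximal mass `m` would form a
finite nonempty set `A`; for `z ∈ A` the integrand is at most `m` with mean `m`, so almost surely
`z ↦ (z - b₀) / a₀` permutes `A` and therefore fixes its barycentre `w`, i.e. `a₀ w + b₀ = w`
almost surely. Such a `w` can be taken rational (`b₀ / (1 - a₀)` at any sample with `a₀ ≠ 1`, and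
`0` if `a₀ = 1` almost surely), against nondegeneracy.
-/

namespace MeasureTheory.Measure

variable {α : Type*} [MeasurableSpace α] [MeasurableSingletonClass α] (ν : Measure α)
  [IsFiniteMeasure ν]

lemma finite_setOf_le_measure_singleton {ε : ℝ≥0∞} (hε : 0 < ε) : {x | ε ≤ ν {x}}.Finite :=
  finite_const_le_meas_of_disjoint_iUnion ν hε measurableSet_singleton
    (fun _ _ hxy => Set.disjoint_singleton.2 hxy) (measure_ne_top ν _)

lemma exists_forall_measure_singleton_le {x₀ : α} (hx₀ : ν {x₀} ≠ 0) :
    ∃ x₁, ∀ x, ν {x} ≤ ν {x₁} := by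
  have hfin := finite_setOf_le_measure_singleton ν (pos_iff_ne_zero.2 hx₀)
  obtain ⟨x₁, hx₁, hmax⟩ :=
    hfin.toFinset.exists_max_image (fun x => ν {x}) ⟨x₀, hfin.mem_toFinset.2 (le_refl (ν {x₀}))⟩
  refine ⟨x₁, fun x => ?_⟩
  by_cases hx : ν {x₀} ≤ ν {x}
  · exact hmax x (hfin.mem_toFinset.2 hx)
  · exact (not_le.1 hx).le.trans (hfin.mem_toFinset.1 hx₁)

end MeasureTheory.Measure

lemma Finset.sum_comp_eq_sum_of_mapsTo_of_injOn {β M : Type*} [AddCommMonoid M] {s : Finset β}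
    {f : β → β} (g : β → M) (hmaps : Set.MapsTo f s s) (hinj : Set.InjOn f s) :
    ∑ x ∈ s, g (f x) = ∑ x ∈ s, g x :=
  Finset.sum_nbij f hmaps hinj ((s.finite_toSet.injOn_iff_bijOn_of_mapsTo hmaps).1 hinj).surjOn
    fun _ _ => rfl

lemma Finset.mul_sum_add_card_mul_eq_sum_of_mapsTo {K : Type*} [Field K] {s : Finset K} {c d : K}
    (hc : c ≠ 0) (hmaps : Set.MapsTo (fun z => (z - d) / c) s s) :
    c * ∑ z ∈ s, z + s.card * d = ∑ z ∈ s, z := by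
  have hinj : Set.InjOn (fun z => (z - d) / c) s := fun x _ y _ h => by
    simpa using (div_left_inj' hc).1 h
  have hsum := s.sum_comp_eq_sum_of_mapsTo_of_injOn id hmaps hinj
  simp only [id, ← Finset.sum_div, Finset.sum_sub_distrib, Finset.sum_const, nsmul_eq_mul,
    div_eq_iff hc] at hsum
  linear_combination -hsum

lemma preimage_mul_add_singleton {K : Type*} [Field K] {c : K} (hc : c ≠ 0) (d z : K) :
    (fun x => c * x + d) ⁻¹' {z} = {(z - d) / c} := by
  ext x
  simp only [Set.mem_preimage, Set.mem_singleton_iff, eq_div_iff hc]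
  constructor <;> intro h <;> linear_combination h

lemma RingHom.exists_eventually_fixedPoint {Ω F K : Type*} [Field F] [Field K] (ι : F →+* K)
    {l : Filter Ω} {a b : Ω → F} {w : K} (hw : ∀ᶠ ω in l, ι (a ω) * w + ι (b ω) = w) :
    ∃ z : F, ∀ᶠ ω in l, a ω * z + b ω = z := by
  by_cases h : ∃ ω, ι (a ω) * w + ι (b ω) = w ∧ a ω ≠ 1
  · obtain ⟨ω₀, hω₀, ha⟩ := h
    have hne : (1 : K) - ι (a ω₀) ≠ 0 := by
      rw [← map_one ι, ← map_sub]
      exact (map_ne_zero ι).2 (sub_ne_zero.2 ha.symm)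
    have hw₀ : w = ι (b ω₀ / (1 - a ω₀)) := by
      rw [map_div₀, map_sub, map_one, eq_div_iff hne]
      linear_combination -hω₀
    refine ⟨b ω₀ / (1 - a ω₀), hw.mono fun ω hω => ι.injective ?_⟩
    rw [hw₀] at hω
    simpa only [map_add, map_mul] using hω
  · refine ⟨0, hw.mono fun ω hω => ?_⟩
    have ha : a ω = 1 := by_contra fun ha => h ⟨ω, hω, ha⟩
    rw [ha, map_one, one_mul, add_eq_left, map_eq_zero] at hω
    simp [hω]

theorem exists_ae_fixedPoint_of_measure_singleton_eq_lintegral {Ω K : Type*} [MeasurableSpace Ω]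
    {P : Measure Ω} [IsProbabilityMeasure P] [Field K] [CharZero K] [MeasurableSpace K]
    [MeasurableSingletonClass K] {ν : Measure K} [IsFiniteMeasure ν] {c d : Ω → K}
    (hc : ∀ ω, c ω ≠ 0) (hstat : ∀ z, ν {z} = ∫⁻ ω, ν {(z - d ω) / c ω} ∂P) {z₀ : K}
    (hz₀ : ν {z₀} ≠ 0) : ∃ w, ∀ᵐ ω ∂P, c ω * w + d ω = w := by
  obtain ⟨x₁, hmax⟩ := ν.exists_forall_measure_singleton_le hz₀
  set m := ν {x₁}
  have hm0 : 0 < m := pos_iff_ne_zero.2 fun h => hz₀ (le_antisymm (h ▸ hmax z₀) zero_le)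
  have hfin := ν.finite_setOf_le_measure_singleton hm0
  set s := hfin.toFinset
  have hmaps : ∀ z ∈ s, ∀ᵐ ω ∂P, (z - d ω) / c ω ∈ s := by
    intro z hz
    have hzm : ν {z} = m := le_antisymm (hmax z) (hfin.mem_toFinset.1 hz)
    have hae := ae_eq_of_ae_le_of_lintegral_le (ae_of_all P fun ω => hmax ((z - d ω) / c ω))
      (by rw [← hstat, hzm]; exact measure_ne_top ν _) aemeasurable_const
      (by rw [← hstat, hzm, lintegral_const, measure_univ, mul_one])
    exact hae.mono fun ω hω => hfin.mem_toFinset.2 hω.ge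
  have hcard : (s.card : K) ≠ 0 :=
    Nat.cast_ne_zero.2 (Finset.card_ne_zero.2 ⟨x₁, hfin.mem_toFinset.2 (le_refl m)⟩)
  refine ⟨(∑ z ∈ s, z) / s.card, ((eventually_all_finset s).2 hmaps).mono fun ω hω => ?_⟩
  have hbar := s.mul_sum_add_card_mul_eq_sum_of_mapsTo (hc ω) hω
  field_simp
  linear_combination hbar

section IID

variable {Ω β : Type*} [MeasurableSpace Ω] [MeasurableSpace β] {P : Measure Ω}
  {f : ℕ → Ω → β}

lemma ProbabilityTheory.iIndepFun.map_shift_eq [IsProbabilityMeasure P]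
    (hf : ∀ n, Measurable (f n)) (hind : iIndepFun f P)
    (hident : ∀ n, IdentDistrib (f n) (f 0) P P) :
    P.map (fun ω n => f (n + 1) ω) = P.map (fun ω n => f n ω) := by
  rw [hind.map_fun_eq_infinitePi_map hf,
    (hind.precomp (add_left_injective 1)).map_fun_eq_infinitePi_map fun n => hf (n + 1)]
  simp only [(hident _).map_eq]

lemma ProbabilityTheory.iIndepFun.indepFun_shift (hf : ∀ n, Measurable (f n))
    (hind : iIndepFun f P) : IndepFun (f 0) (fun ω n => f (n + 1) ω) P := by
  have hdisj : Disjoint ({0} : Set ℕ) {n | 1 ≤ n} := by simp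
  have hsplit := indep_iSup_of_disjoint (fun n => (hf n).comap_le) hind hdisj
  refine indep_of_indep_of_le_right (indep_of_indep_of_le_left hsplit ?_) ?_
  · exact le_iSup₂ (f := fun n (_ : n ∈ ({0} : Set ℕ)) => MeasurableSpace.comap (f n) _) 0 rfl
  · rw [MeasurableSpace.pi, MeasurableSpace.comap_iSup]
    refine iSup_le fun n => ?_
    rw [MeasurableSpace.comap_comp]
    exact le_iSup₂ (f := fun n (_ : n ∈ {n : ℕ | 1 ≤ n}) => MeasurableSpace.comap (f n) _)
      (n + 1) (Nat.le_add_left 1 n)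

end IID

theorem exists_measurable_limit_of_map_eq {Ω E K : Type*} [MeasurableSpace Ω] [MeasurableSpace E]
    [TopologicalSpace K] [TopologicalSpace.IsCompletelyPseudoMetrizableSpace K]
    [MeasurableSpace K] [BorelSpace K] {P : Measure Ω} {g : ℕ → E → K}
    (hg : ∀ n, StronglyMeasurable (g n)) {X X' : Ω → E} (hX : Measurable X)
    (hX' : Measurable X') (hlaw : P.map X' = P.map X) {Z : Ω → K}
    (hZ : ∀ᵐ ω ∂P, Tendsto (fun n => g n (X ω)) atTop (𝓝 (Z ω))) :
    ∃ W : E → K, Measurable W ∧ (∀ᵐ ω ∂P, Tendsto (fun n => g n (X ω)) atTop (𝓝 (W (X ω)))) ∧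
      ∀ᵐ ω ∂P, Tendsto (fun n => g n (X' ω)) atTop (𝓝 (W (X' ω))) := by
  have hconv : ∀ᵐ x ∂P.map X, ∃ c, Tendsto (fun n => g n x) atTop (𝓝 c) := by
    rw [ae_map_iff hX.aemeasurable (StronglyMeasurable.measurableSet_exists_tendsto hg)]
    exact hZ.mono fun ω h => ⟨Z ω, h⟩
  obtain ⟨W, hWm, hW⟩ :=
    measurable_limit_of_tendsto_metrizable_ae (fun n => (hg n).measurable.aemeasurable) hconv
  exact ⟨W, hWm, ae_of_ae_map hX.aemeasurable hW, ae_of_ae_map hX'.aemeasurable (hlaw ▸ hW)⟩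

theorem map_singleton_eq_lintegral_of_indepFun {Ω α E : Type*} [MeasurableSpace Ω]
    [MeasurableSpace α] [Countable α] [MeasurableSingletonClass α] [MeasurableSpace E]
    [MeasurableSingletonClass E] {P : Measure Ω} [IsProbabilityMeasure P] {Y : Ω → α}
    {Z Z' : Ω → E} {u : α → E → E} (hu : ∀ y, Measurable (u y)) (hY : Measurable Y)
    (hZ' : Measurable Z') (hind : IndepFun Y Z' P) (hlaw : P.map Z' = P.map Z)
    (hrec : ∀ᵐ ω ∂P, Z ω = u (Y ω) (Z' ω)) (z : E) :
    P.map Z {z} = ∫⁻ ω, P.map Z (u (Y ω) ⁻¹' {z}) ∂P := by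
  have hu₂ : Measurable (Function.uncurry u) := measurable_from_prod_countable_right hu
  have hS : MeasurableSet {p : α × E | u p.1 p.2 = z} := hu₂ (measurableSet_singleton z)
  calc P.map Z {z} = P.map (fun ω => (Y ω, Z' ω)) {p | u p.1 p.2 = z} := by
        have hZ : Measurable fun ω => u (Y ω) (Z' ω) := hu₂.comp (hY.prodMk hZ')
        rw [Measure.map_congr hrec, Measure.map_apply hZ (measurableSet_singleton z),
          Measure.map_apply (hY.prodMk hZ') hS]
        rfl
    _ = ((P.map Y).prod (P.map Z')) {p | u p.1 p.2 = z} := by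
        rw [(indepFun_iff_map_prod_eq_prod_map_map hY.aemeasurable hZ'.aemeasurable).1 hind]
    _ = ∫⁻ y, P.map Z' (u y ⁻¹' {z}) ∂P.map Y := Measure.prod_apply hS
    _ = ∫⁻ ω, P.map Z (u (Y ω) ⁻¹' {z}) ∂P := by
        rw [lintegral_map (measurable_of_countable _) hY, hlaw]

def perpetuitySum {R : Type*} [CommSemiring R] (n : ℕ) (x : ℕ → R × R) : R :=
  ∑ k ∈ Finset.range n, (∏ j ∈ Finset.range k, (x j).1) * (x k).2

lemma perpetuitySum_succ {R : Type*} [CommSemiring R] (n : ℕ) (x : ℕ → R × R) :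
    perpetuitySum (n + 1) x = (x 0).2 + (x 0).1 * perpetuitySum n fun k => x (k + 1) := by
  simp only [perpetuitySum, Finset.sum_range_succ', Finset.prod_range_succ', Finset.mul_sum,
    Finset.range_zero, Finset.prod_empty, one_mul]
  rw [add_comm]
  congr 1
  exact Finset.sum_congr rfl fun k _ => by ring

lemma measurable_perpetuitySum (n : ℕ) : Measurable (perpetuitySum (R := ℚ) n) := by
  unfold perpetuitySum
  fun_prop

theorem map_singleton_perpetuity_eq_lintegral {Ω K : Type*} [MeasurableSpace Ω] {P : Measure Ω}
    [IsProbabilityMeasure P] {a b : ℕ → Ω → ℚ} (hmeas : ∀ n, Measurable fun ω => (a n ω, b n ω))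
    (hindep : iIndepFun (fun n ω => (a n ω, b n ω)) P)
    (hident : ∀ n, IdentDistrib (fun ω => (a n ω, b n ω)) (fun ω => (a 0 ω, b 0 ω)) P P)
    (hne : ∀ ω, a 0 ω ≠ 0) [NormedField K] [CompleteSpace K] [MeasurableSpace K] [BorelSpace K]
    (ι : ℚ →+* K) {Z : Ω → K}
    (hZ : ∀ᵐ ω ∂P, Tendsto (fun n => ι (perpetuitySum n fun k => (a k ω, b k ω))) atTop
      (𝓝 (Z ω)))
    (z : K) :
    P.map Z {z} = ∫⁻ ω, P.map Z {(z - ι (b 0 ω)) / ι (a 0 ω)} ∂P := by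
  set X : Ω → ℕ → ℚ × ℚ := fun ω n => (a n ω, b n ω)
  set X' : Ω → ℕ → ℚ × ℚ := fun ω n => (a (n + 1) ω, b (n + 1) ω)
  have hX : Measurable X := measurable_pi_lambda _ hmeas
  have hX' : Measurable X' := measurable_pi_lambda _ fun n => hmeas (n + 1)
  have hg : ∀ n, StronglyMeasurable fun x => ι (perpetuitySum n x) := fun n =>
    stronglyMeasurable_iff_measurable_separable.2
      ⟨(measurable_of_countable ι).comp (measurable_perpetuitySum n),
        ((Set.countable_range ι).mono (Set.range_comp_subset_range _ ι)).isSeparable⟩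
  -- realising the limit as a measurable function `W` of the whole sequence makes `W ∘ X'` a copy
  -- of `Z` independent of `(a₀, b₀)`
  obtain ⟨W, hWm, hWX, hWX'⟩ :=
    exists_measurable_limit_of_map_eq hg hX hX' (hindep.map_shift_eq hmeas hident) hZ
  have hZW : Z =ᵐ[P] W ∘ X := (hZ.and hWX).mono fun ω h => tendsto_nhds_unique h.1 h.2
  have hrec : ∀ᵐ ω ∂P, Z ω = ι (a 0 ω) * W (X' ω) + ι (b 0 ω) := by
    filter_upwards [hZ, hWX'] with ω hlim hlim'
    refine tendsto_nhds_unique ((tendsto_add_atTop_iff_nat 1).2 hlim) ?_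
    simp only [perpetuitySum_succ, map_add, map_mul, add_comm (ι (b 0 ω))]
    exact (tendsto_const_nhds.mul hlim').add tendsto_const_nhds
  have hlaw : P.map (W ∘ X') = P.map Z := by
    rw [Measure.map_congr hZW, ← Measure.map_map hWm hX', ← Measure.map_map hWm hX,
      hindep.map_shift_eq hmeas hident]
  rw [map_singleton_eq_lintegral_of_indepFun
    (u := fun q x => ι q.1 * x + ι q.2) (fun q => by fun_prop) (hmeas 0) (hWm.comp hX')
    ((hindep.indepFun_shift hmeas).comp measurable_id hWm) hlaw hrec z]
  simp only [preimage_mul_add_singleton ((map_ne_zero ι).2 (hne _))]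

theorem statement3_general
    {Ω : Type*} [MeasureSpace Ω] [IsProbabilityMeasure (ℙ : Measure Ω)]
    (a b : ℕ → Ω → ℚ)
    (hmeas : ∀ n, Measurable fun ω => (a n ω, b n ω))
    (hindep : iIndepFun (fun n ω => (a n ω, b n ω)) ℙ)
    (hident : ∀ n, IdentDistrib (fun ω => (a n ω, b n ω)) (fun ω => (a 0 ω, b 0 ω)) ℙ ℙ)
    (hne : ∀ n ω, a n ω ≠ 0)
    (hnondeg₂ : ∀ z : ℚ, ℙ {ω | a 0 ω * z + b 0 ω = z} < 1)
    {K : Type*} [NormedField K] [CompleteSpace K] [MeasurableSpace K] [BorelSpace K]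
    (ι : ℚ →+* K)
    (Z : Ω → K)
    (hZ : ∀ᵐ ω ∂ℙ,
      Tendsto (fun n => ι (∑ k ∈ Finset.range n, (∏ j ∈ Finset.range k, a j ω) * b k ω))
        atTop (𝓝 (Z ω))) :
    ∀ z : K, Measure.map Z ℙ {z} = 0 := by
  have : CharZero K := charZero_of_injective_ringHom ι.injective
  intro z₀
  by_contra hz₀
  obtain ⟨w, hw⟩ := exists_ae_fixedPoint_of_measure_singleton_eq_lintegral
    (fun ω => (map_ne_zero ι).2 (hne 0 ω))
    (map_singleton_perpetuity_eq_lintegral hmeas hindep hident (hne 0) ι hZ) hz₀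
  obtain ⟨q, hq⟩ := ι.exists_eventually_fixedPoint hw
  have hmeas_q : MeasurableSet {ω | a 0 ω * q + b 0 ω = q} :=
    hmeas 0 (Set.to_countable {p : ℚ × ℚ | p.1 * q + p.2 = q}).measurableSet
  refine (hnondeg₂ q).ne ?_
  rwa [ae_iff_measure_eq hmeas_q.nullMeasurableSet, measure_univ] at hq

/-- With `K` a complete normed field realizing a place of `ℚ`
(a prime `p` or `p = ∞`) and `(aₙ, bₙ)` i.i.d. in `ℚ* × ℚ` with nondegenerate
common law (`P[a₁ = 1] < 1` and `P[a₁ z + b₁ = z] < 1` for every `z ∈ ℚ`), assume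
`E[|log |a₁|_p|] < ∞`, `E[log⁺ |b₁|_p] < ∞` and `φ_p = E[log |a₁|_p] < 0`.  Then the
law `ν_p` of the a.s. limit `Z_∞^p` of `B_n = Σ_{k=1}^n a₁⋯a_{k-1} b_k` has no atom:
`ν_p({z}) = 0` for every `z ∈ ℚ_p`. -/
theorem statement3
    {Ω : Type*} [MeasureSpace Ω] [IsProbabilityMeasure (ℙ : Measure Ω)]
    (a b : ℕ → Ω → ℚ)
    (hmeas : ∀ n, Measurable fun ω => (a n ω, b n ω))
    (hindep : iIndepFun (fun n ω => (a n ω, b n ω)) ℙ)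
    (hident : ∀ n, IdentDistrib (fun ω => (a n ω, b n ω)) (fun ω => (a 0 ω, b 0 ω)) ℙ ℙ)
    (hne : ∀ n ω, a n ω ≠ 0)
    (hnondeg₁ : ℙ {ω | a 0 ω = 1} < 1)
    (hnondeg₂ : ∀ z : ℚ, ℙ {ω | a 0 ω * z + b 0 ω = z} < 1)
    {K : Type*} [NormedField K] [CompleteSpace K] [MeasurableSpace K] [BorelSpace K]
    (ι : ℚ →+* K) (hdense : DenseRange ι)
    (hplace : (∀ q : ℚ, ‖ι q‖ = |(q : ℝ)|) ∨
      ∃ p : ℕ, p.Prime ∧ ∀ q : ℚ, ‖ι q‖ = (padicNorm p q : ℝ))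
    (hInta : Integrable (fun ω => Real.log ‖ι (a 0 ω)‖) ℙ)
    (hIntb : Integrable (fun ω => max (Real.log ‖ι (b 0 ω)‖) 0) ℙ)
    (hdrift : ∫ ω, Real.log ‖ι (a 0 ω)‖ ∂ℙ < 0)
    (Z : Ω → K)
    (hZ : ∀ᵐ ω ∂ℙ,
      Tendsto (fun n => ι (∑ k ∈ Finset.range n, (∏ j ∈ Finset.range k, a j ω) * b k ω))
        atTop (𝓝 (Z ω))) :
    ∀ z : K, Measure.map Z ℙ {z} = 0 :=
  statement3_general a b hmeas hindep hident hne hnondeg₂ ι Z hZ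
end

section
/- For every real k ≥ 0, the set {(a,b) ∈ ℚ* × ℚ : ⟨a⟩ + ⟨b⟩⁺ ≤ k} is finite and its cardinality is at most 2·e^{2k}·(2·e^{2k} + 1). -/
/-- `⟨q⟩ = Σ_{p prime} |log |q|_p|` (a finite sum, expressed as a `tsum` over primes). -/
noncomputable def nad (q : ℚ) : ℝ :=
  ∑' p : Nat.Primes, |Real.log (padicNorm p.1 q : ℝ)|

/-- The height `⟨b⟩⁺ = log⁺ |b|_∞ + Σ_{p prime} log⁺ |b|_p`, where `log⁺ t = max (log t) 0`
(and `⟨0⟩⁺ = 0`, automatic from `Real.log 0 = 0`). -/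
noncomputable def nadPlus (q : ℚ) : ℝ :=
  max (Real.log |(q : ℝ)|) 0 + ∑' p : Nat.Primes, max (Real.log (padicNorm p.1 q : ℝ)) 0


open Finset

lemma tsum_primes_eq_sum (f : ℕ → ℝ) (S : Finset ℕ) (hS : ∀ p ∈ S, p.Prime)
    (h0 : ∀ p : ℕ, p.Prime → p ∉ S → f p = 0) :
    ∑' p : Nat.Primes, f p.1 = ∑ p ∈ S, f p := by
  have h1 : ∑' p : Nat.Primes, f p.1 = ∑' p : {p : ℕ | p.Prime}, f p := rfl
  rw [h1, _root_.tsum_subtype]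
  rw [tsum_eq_sum (s := S) ?_]
  · refine Finset.sum_congr rfl fun p hp => ?_
    simp only [Set.indicator_apply]
    rw [if_pos (show p ∈ {p | Nat.Prime p} from hS p hp)]
  · intro p hp
    simp only [Set.indicator_apply]
    by_cases h : p ∈ {p | Nat.Prime p}
    · rw [if_pos h]; exact h0 p h hp
    · rw [if_neg h]

lemma log_nat_eq_sum (n : ℕ) (hn : n ≠ 0) (S : Finset ℕ) (hS : ∀ p ∈ S, p.Prime)
    (hsub : n.primeFactors ⊆ S) :
    Real.log n = ∑ p ∈ S, (padicValNat p n : ℝ) * Real.log p := by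
  have h3 : ∏ p ∈ n.primeFactors, p ^ padicValNat p n = n := by
    conv_rhs => rw [← Nat.factorization_prod_pow_eq_self hn]
    rw [Finsupp.prod, Nat.support_factorization]
    exact Finset.prod_congr rfl fun p hp => by
      rw [Nat.factorization_def n (Nat.prime_of_mem_primeFactors hp)]
  have h4 : ∏ p ∈ n.primeFactors, p ^ padicValNat p n = ∏ p ∈ S, p ^ padicValNat p n := by
    refine Finset.prod_subset hsub fun p hp hnp => ?_
    have : ¬ (p ∣ n) := fun hd => hnp (Nat.mem_primeFactors.mpr ⟨hS p hp, hd, hn⟩)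
    rw [padicValNat.eq_zero_of_not_dvd this, pow_zero]
  have h2 : ∏ p ∈ S, p ^ padicValNat p n = n := by rw [← h4, h3]
  have h1 : (n : ℝ) = ((∏ p ∈ S, p ^ padicValNat p n : ℕ) : ℝ) := by rw [h2]
  push_cast at h1
  rw [h1, Real.log_prod]
  · exact Finset.sum_congr rfl fun p hp => by rw [Real.log_pow]
  · intro p hp
    exact pow_ne_zero _ (by exact_mod_cast (hS p hp).pos.ne')

lemma log_padicNorm_eq (p : ℕ) (hp : p.Prime) (q : ℚ) (hq : q ≠ 0) :
    Real.log (padicNorm p q : ℝ) = -(padicValRat p q : ℝ) * Real.log p := by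
  have := Fact.mk hp
  rw [padicNorm.eq_zpow_of_nonzero hq]
  push_cast
  rw [Real.log_zpow]
  push_cast
  ring

lemma not_dvd_num_of_dvd_den {p : ℕ} (hp : p.Prime) {q : ℚ} (hd : p ∣ q.den) :
    ¬ (p ∣ q.num.natAbs) := by
  intro h
  have : p ∣ Nat.gcd q.num.natAbs q.den := Nat.dvd_gcd h hd
  rw [q.reduced] at this
  exact hp.one_lt.ne' (Nat.dvd_one.mp this)

lemma maxlog_eq (p : ℕ) (hp : p.Prime) (q : ℚ) (hq : q ≠ 0) :
    max (Real.log (padicNorm p q : ℝ)) 0 = (padicValNat p q.den : ℝ) * Real.log p := by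
  have hlogp : (0:ℝ) ≤ Real.log p := Real.log_nonneg (by exact_mod_cast hp.one_le)
  rw [log_padicNorm_eq p hp q hq, padicValRat_def]
  by_cases hd : p ∣ q.den
  · have h1 : padicValInt p q.num = 0 :=
      padicValNat.eq_zero_of_not_dvd (not_dvd_num_of_dvd_den hp hd)
    rw [h1]
    simp only [Nat.cast_zero, zero_sub, Int.cast_neg, Int.cast_natCast, neg_neg]
    exact max_eq_left (by positivity)
  · rw [padicValNat.eq_zero_of_not_dvd hd]
    simp only [Nat.cast_zero, sub_zero, Int.cast_natCast, zero_mul, neg_mul]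
    exact max_eq_right (neg_nonpos.mpr (by positivity))

lemma abslog_eq (p : ℕ) (hp : p.Prime) (q : ℚ) (hq : q ≠ 0) :
    |Real.log (padicNorm p q : ℝ)| =
      ((padicValNat p q.num.natAbs : ℝ) + (padicValNat p q.den : ℝ)) * Real.log p := by
  have hlogp : (0:ℝ) ≤ Real.log p := Real.log_nonneg (by exact_mod_cast hp.one_le)
  rw [log_padicNorm_eq p hp q hq, padicValRat_def]
  have hvi : padicValInt p q.num = padicValNat p q.num.natAbs := rfl
  by_cases hd : p ∣ q.den
  · have h1 : padicValNat p q.num.natAbs = 0 :=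
      padicValNat.eq_zero_of_not_dvd (not_dvd_num_of_dvd_den hp hd)
    rw [hvi, h1]
    simp only [Nat.cast_zero, zero_sub, Int.cast_neg, Int.cast_natCast, neg_neg, zero_add]
    rw [abs_of_nonneg (by positivity)]
  · rw [hvi, padicValNat.eq_zero_of_not_dvd hd]
    simp only [Nat.cast_zero, sub_zero, Int.cast_natCast, add_zero, neg_mul]
    rw [abs_neg, abs_of_nonneg (by positivity)]

lemma sum_max_eq (q : ℚ) (hq : q ≠ 0) :
    ∑' p : Nat.Primes, max (Real.log (padicNorm p.1 q : ℝ)) 0 = Real.log q.den := by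
  have hden : q.den ≠ 0 := q.den_pos.ne'
  refine (tsum_primes_eq_sum (fun n => max (Real.log (padicNorm n q : ℝ)) 0)
      q.den.primeFactors (fun p hp => Nat.prime_of_mem_primeFactors hp) ?h0).trans ?_
  case h0 =>
    intro p hpp hp
    show max (Real.log (padicNorm p q : ℝ)) 0 = 0
    rw [maxlog_eq p hpp q hq, padicValNat.eq_zero_of_not_dvd
      (fun hd => hp (Nat.mem_primeFactors.mpr ⟨hpp, hd, hden⟩))]
    simp
  rw [log_nat_eq_sum q.den hden q.den.primeFactors
      (fun p hp => Nat.prime_of_mem_primeFactors hp) subset_rfl]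
  exact Finset.sum_congr rfl fun p hp => maxlog_eq p (Nat.prime_of_mem_primeFactors hp) q hq

lemma nad_eq (q : ℚ) (hq : q ≠ 0) :
    nad q = Real.log q.num.natAbs + Real.log q.den := by
  have hnum : q.num.natAbs ≠ 0 := Int.natAbs_ne_zero.mpr (Rat.num_ne_zero.mpr hq)
  have hden : q.den ≠ 0 := q.den_pos.ne'
  set S := (q.num.natAbs * q.den).primeFactors with hSdef
  have hS : ∀ p ∈ S, p.Prime := fun p hp => Nat.prime_of_mem_primeFactors hp
  have hmul : q.num.natAbs * q.den ≠ 0 := Nat.mul_ne_zero hnum hden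
  have hsub1 : q.num.natAbs.primeFactors ⊆ S := by
    rw [hSdef, Nat.primeFactors_mul hnum hden]; exact Finset.subset_union_left
  have hsub2 : q.den.primeFactors ⊆ S := by
    rw [hSdef, Nat.primeFactors_mul hnum hden]; exact Finset.subset_union_right
  rw [nad]
  refine (tsum_primes_eq_sum (fun n => |Real.log (padicNorm n q : ℝ)|) S hS ?h0).trans ?_
  case h0 =>
    intro p hpp hp
    have hnd : ¬ p ∣ q.num.natAbs * q.den :=
      fun hd => hp (Nat.mem_primeFactors.mpr ⟨hpp, hd, hmul⟩)
    show |Real.log (padicNorm p q : ℝ)| = 0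
    rw [abslog_eq p hpp q hq,
      padicValNat.eq_zero_of_not_dvd (fun h => hnd (Dvd.dvd.mul_right h q.den)),
      padicValNat.eq_zero_of_not_dvd (fun h => hnd (Dvd.dvd.mul_left h q.num.natAbs))]
    simp
  rw [log_nat_eq_sum _ hnum S hS hsub1, log_nat_eq_sum _ hden S hS hsub2,
    ← Finset.sum_add_distrib]
  exact Finset.sum_congr rfl fun p hp => by rw [abslog_eq p (hS p hp) q hq]; ring

lemma nadPlus_nonneg (q : ℚ) : 0 ≤ nadPlus q := by
  have h1 : 0 ≤ ∑' p : Nat.Primes, max (Real.log (padicNorm p.1 q : ℝ)) 0 :=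
    tsum_nonneg fun p => le_max_right _ _
  have h2 : (0:ℝ) ≤ max (Real.log |(q : ℝ)|) 0 := le_max_right _ _
  rw [nadPlus]; linarith

/-- For every real `k ≥ 0`, the set
`{(a,b) ∈ ℚ* × ℚ : ⟨a⟩ + ⟨b⟩⁺ ≤ k}` is finite with cardinality at most
`2 e^{2k} (2 e^{2k} + 1)`. -/
theorem statement10 (k : ℝ) (hk : 0 ≤ k) :
    {x : ℚ × ℚ | x.1 ≠ 0 ∧ nad x.1 + nadPlus x.2 ≤ k}.Finite ∧
      ({x : ℚ × ℚ | x.1 ≠ 0 ∧ nad x.1 + nadPlus x.2 ≤ k}.ncard : ℝ) ≤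
        2 * Real.exp (2 * k) * (2 * Real.exp (2 * k) + 1) := by
  classical
  set S : Set (ℚ × ℚ) := {x : ℚ × ℚ | x.1 ≠ 0 ∧ nad x.1 + nadPlus x.2 ≤ k} with hSdef
  set M : ℕ := ⌊Real.exp k⌋₊ with hMdef
  have hM1 : 1 ≤ M := Nat.le_floor (by simpa using Real.one_le_exp hk)
  have hMle : (M : ℝ) ≤ Real.exp k := Nat.floor_le (Real.exp_pos k).le
  set A : Finset (ℤ × ℤ) := (Finset.Icc (-(M:ℤ)) M \ {0}) ×ˢ Finset.Icc (1:ℤ) M with hAdef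
  set B : Finset (ℤ × ℤ) := A ∪ {((0:ℤ), (1:ℤ))} with hBdef
  set T : Finset ((ℤ × ℤ) × (ℤ × ℤ)) := A ×ˢ B with hTdef
  set F : ℚ × ℚ → (ℤ × ℤ) × (ℤ × ℤ) :=
    fun x => ((x.1.num, (x.1.den : ℤ)), (x.2.num, (x.2.den : ℤ))) with hFdef
  have hFinj : Function.Injective F := by
    intro x y h
    simp only [hFdef, Prod.mk.injEq] at h
    obtain ⟨⟨h1, h2⟩, h3, h4⟩ := h
    exact Prod.ext (Rat.ext h1 (by exact_mod_cast h2)) (Rat.ext h3 (by exact_mod_cast h4))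
  -- the key: numerators/denominators are bounded
  have hbound : ∀ q : ℚ, q ≠ 0 → Real.log q.num.natAbs ≤ k → q.num.natAbs ≤ M := by
    intro q hq hlog
    refine Nat.le_floor ?_
    have h1 : (1:ℝ) ≤ (q.num.natAbs : ℝ) := by
      exact_mod_cast Nat.one_le_iff_ne_zero.mpr (Int.natAbs_ne_zero.mpr (Rat.num_ne_zero.mpr hq))
    exact (Real.log_le_iff_le_exp (by linarith)).mp hlog
  have hboundden : ∀ q : ℚ, Real.log q.den ≤ k → q.den ≤ M := by
    intro q hlog
    refine Nat.le_floor ?_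
    have h1 : (1:ℝ) ≤ (q.den : ℝ) := by exact_mod_cast q.den_pos
    exact (Real.log_le_iff_le_exp (by linarith)).mp hlog
  have key : ∀ x ∈ S, F x ∈ T := by
    rintro ⟨a, b⟩ ⟨ha0, hle⟩
    have hnum0 : a.num ≠ 0 := Rat.num_ne_zero.mpr ha0
    have hnadA : nad a = Real.log a.num.natAbs + Real.log a.den := nad_eq a ha0
    have hlogn : 0 ≤ Real.log (a.num.natAbs : ℝ) := Real.log_nonneg (by
      exact_mod_cast Nat.one_le_iff_ne_zero.mpr (Int.natAbs_ne_zero.mpr hnum0))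
    have hlogd : 0 ≤ Real.log (a.den : ℝ) := Real.log_nonneg (by exact_mod_cast a.den_pos)
    have hnadPb : 0 ≤ nadPlus b := nadPlus_nonneg b
    have hka : nad a ≤ k := by linarith
    have hkb : nadPlus b ≤ k := by
      have : 0 ≤ nad a := by rw [hnadA]; linarith
      linarith
    have hanum : a.num.natAbs ≤ M := hbound a ha0 (by linarith [hnadA ▸ hka])
    have haden : a.den ≤ M := hboundden a (by linarith [hnadA ▸ hka])
    have hmemA : (a.num, (a.den : ℤ)) ∈ A := by
      rw [hAdef, Finset.mem_product]
      constructor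
      · rw [Finset.mem_sdiff, Finset.mem_Icc]
        refine ⟨⟨?_, ?_⟩, by simpa using hnum0⟩
        · have : |a.num| ≤ (M : ℤ) := by
            rw [Int.abs_eq_natAbs]; exact_mod_cast hanum
          linarith [(abs_le.mp this).1]
        · have : |a.num| ≤ (M : ℤ) := by
            rw [Int.abs_eq_natAbs]; exact_mod_cast hanum
          linarith [(abs_le.mp this).2]
      · rw [Finset.mem_Icc]
        exact ⟨show (1:ℤ) ≤ (a.den:ℤ) by exact_mod_cast a.den_pos,
          show (a.den:ℤ) ≤ (M:ℤ) by exact_mod_cast haden⟩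
    have hmemB : (b.num, (b.den : ℤ)) ∈ B := by
      by_cases hb0 : b = 0
      · rw [hBdef, Finset.mem_union]
        right
        simp [hb0]
      · have hnadPbeq : nadPlus b = max (Real.log |(b : ℝ)|) 0 + Real.log b.den := by
          rw [nadPlus, sum_max_eq b hb0]
        have hbnum0 : b.num ≠ 0 := Rat.num_ne_zero.mpr hb0
        have hlogabs : Real.log |(b : ℝ)| = Real.log b.num.natAbs - Real.log b.den := by
          have hd : (0:ℝ) < (b.den : ℝ) := by exact_mod_cast b.den_pos
          have hn : ((b.num.natAbs : ℕ) : ℝ) = |((b.num : ℤ) : ℝ)| := by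
            rw [Nat.cast_natAbs, Int.cast_abs]
          rw [Rat.cast_def, abs_div, abs_of_pos hd,
            Real.log_div (by simpa using hbnum0) hd.ne', ← hn]
        have hld : Real.log b.den ≤ k := by
          have := le_max_right (Real.log |(b : ℝ)|) 0
          linarith [hnadPbeq ▸ hkb]
        have hln : Real.log b.num.natAbs ≤ k := by
          have h1 := le_max_left (Real.log |(b : ℝ)|) 0
          have h2 := hnadPbeq ▸ hkb
          linarith [hlogabs]
        have hbnum : b.num.natAbs ≤ M := hbound b hb0 hln
        have hbden : b.den ≤ M := hboundden b hld
        rw [hBdef, Finset.mem_union]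
        left
        rw [hAdef, Finset.mem_product]
        constructor
        · rw [Finset.mem_sdiff, Finset.mem_Icc]
          have habs : |b.num| ≤ (M : ℤ) := by
            rw [Int.abs_eq_natAbs]; exact_mod_cast hbnum
          refine ⟨⟨?_, ?_⟩, by simpa using hbnum0⟩
          · linarith [(abs_le.mp habs).1]
          · linarith [(abs_le.mp habs).2]
        · rw [Finset.mem_Icc]
          exact ⟨show (1:ℤ) ≤ (b.den:ℤ) by exact_mod_cast b.den_pos,
            show (b.den:ℤ) ≤ (M:ℤ) by exact_mod_cast hbden⟩
    rw [hTdef, Finset.mem_product]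
    exact ⟨hmemA, hmemB⟩
  have hsub : S ⊆ F ⁻¹' ↑T := key
  have hfin : S.Finite :=
    Set.Finite.subset (Set.Finite.preimage hFinj.injOn T.finite_toSet) hsub
  refine ⟨hfin, ?_⟩
  have hcard1 : S.ncard ≤ T.card := by
    have h1 : S.ncard = (F '' S).ncard := (Set.ncard_image_of_injective S hFinj).symm
    have h2 : F '' S ⊆ ↑T := by
      rintro y ⟨x, hx, rfl⟩
      exact key x hx
    calc S.ncard = (F '' S).ncard := h1
      _ ≤ (↑T : Set ((ℤ × ℤ) × (ℤ × ℤ))).ncard := Set.ncard_le_ncard h2 T.finite_toSet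
      _ = T.card := Set.ncard_coe_finset T
  have hAcard : A.card = 2 * M * M := by
    rw [hAdef, Finset.card_product]
    have h0 : ({0} : Finset ℤ) ⊆ Finset.Icc (-(M:ℤ)) M := by
      intro x hx
      rw [Finset.mem_singleton] at hx
      subst hx
      rw [Finset.mem_Icc]
      constructor <;> [linarith [Int.ofNat_le.mpr (Nat.zero_le M)]; exact_mod_cast Nat.zero_le M]
    rw [Finset.card_sdiff_of_subset h0]
    simp [Int.card_Icc]
    omega
  have hBcard : B.card ≤ 2 * M * M + 1 := by
    calc B.card ≤ A.card + ({((0:ℤ), (1:ℤ))} : Finset (ℤ × ℤ)).card := Finset.card_union_le _ _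
      _ = 2 * M * M + 1 := by rw [hAcard, Finset.card_singleton]
  have hTcard : T.card ≤ (2 * M * M) * (2 * M * M + 1) := by
    rw [hTdef, Finset.card_product, hAcard]
    exact Nat.mul_le_mul_left _ hBcard
  have hcast : ((2 * M * M : ℕ) : ℝ) ≤ 2 * Real.exp (2 * k) := by
    have hexp : Real.exp (2 * k) = Real.exp k * Real.exp k := by
      rw [two_mul, Real.exp_add]
    push_cast
    nlinarith [Nat.cast_nonneg (α := ℝ) M, Real.exp_pos k]
  calc (S.ncard : ℝ) ≤ ((2 * M * M) * (2 * M * M + 1) : ℕ) := by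
        exact_mod_cast le_trans hcard1 hTcard
    _ ≤ 2 * Real.exp (2 * k) * (2 * Real.exp (2 * k) + 1) := by
        push_cast
        push_cast at hcast
        nlinarith [mul_nonneg (sub_nonneg.mpr hcast)
          (by positivity : (0:ℝ) ≤ 2*(M:ℝ)*(M:ℝ) + 2*Real.exp (2*k) + 1), hcast,
          Nat.cast_nonneg (α := ℝ) M]
end

section
/- There exists a constant C > 0 such that for every y ∈ H = ℚ* × 𝔸 and every real k ≥ 0, the gauge set 𝒢_k^y = {g ∈ ℚ* × ℚ : ‖g^{-1}y‖ ≤ k} is finite with cardinality at most e^{C(k+1)}. -/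
/-!
For `g = (a, b)` with `‖g⁻¹y‖ ≤ k`, each of the three pieces of the length is at most `k`.
Since `⟨q⟩ ≥ log |num q|` and `⟨q⟩ ≥ log (den q)`, the rational `a⁻¹ y_a` has numerator
and denominator at most `e^k`; as `y_a ≠ 0` it determines `a`, which leaves `O(e^{2k})`
values of `a`. If `(a, b)` and `(a, b')` both lie in the gauge set, the rational
`a⁻¹ (b - b')` is the difference of the adeles `(a, b')⁻¹ y` and `(a, b)⁻¹ y`. The
ultrametric inequality bounds its denominator by `e^{2k}` and the real place bounds its
absolute value by `2 e^k`, so each fibre over `a` has `O(e^{5k})` points, and the gauge set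
has at most `15 e^{7k} ≤ e^{7(k+1)}` elements.
-/

instance (p : Nat.Primes) : Fact p.1.Prime := ⟨p.2⟩

/-- The height of an adele `z = ((z_p)_p, z_∞)`:
`⟨z⟩⁺ = Σ_{p prime} log⁺ |z_p|_p + log⁺ |z_∞|`. -/
noncomputable def adeleHeight (zfin : (p : Nat.Primes) → ℚ_[p.1]) (zinf : ℝ) : ℝ :=
  (∑' p : Nat.Primes, max (Real.log ‖zfin p‖) 0) + max (Real.log |zinf|) 0

/-- The adelic length `‖g⁻¹ y‖` where `g = (a, b) ∈ Aff(ℚ) = ℚ* × ℚ` and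
`y = (ya, (zfin, zinf)) ∈ H = ℚ* × 𝔸`, for the group law `(a,z)(a',z') = (aa', az' + z)`;
here `g⁻¹ = (a⁻¹, -a⁻¹b)` and `g⁻¹y = (a⁻¹ ya, (a⁻¹ z_p - a⁻¹ b)_p)`. -/
noncomputable def gaugeLength (a b ya : ℚ) (zfin : (p : Nat.Primes) → ℚ_[p.1])
    (zinf : ℝ) : ℝ :=
  nad (a⁻¹ * ya) +
    adeleHeight (fun p => ((a⁻¹ : ℚ) : ℚ_[p.1]) * zfin p - ((a⁻¹ * b : ℚ) : ℚ_[p.1]))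
      (((a⁻¹ : ℚ) : ℝ) * zinf - ((a⁻¹ * b : ℚ) : ℝ))

open Real

lemma abs_log_eq_posLog_add_posLog_inv (x : ℝ) : |log x| = log⁺ x + log⁺ x⁻¹ := by
  rw [posLog_apply, posLog_apply, log_inv, max_comm, max_comm 0,
    max_zero_add_max_neg_zero_eq_abs_self]

lemma IsUltrametricDist.norm_sub_le_max {E : Type*} [SeminormedAddGroup E] [IsUltrametricDist E]
    (x y : E) : ‖x - y‖ ≤ max ‖x‖ ‖y‖ := by
  simpa [sub_eq_add_neg] using IsUltrametricDist.norm_add_le_max x (-y)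

lemma IsUltrametricDist.posLog_norm_sub_le {E : Type*} [SeminormedAddGroup E]
    [IsUltrametricDist E] (x y : E) : log⁺ ‖x - y‖ ≤ log⁺ ‖x‖ + log⁺ ‖y‖ := by
  refine (posLog_le_posLog (norm_nonneg _) (IsUltrametricDist.norm_sub_le_max x y)).trans ?_
  rcases max_cases ‖x‖ ‖y‖ with ⟨h, -⟩ | ⟨h, -⟩ <;> rw [h]
  · exact le_add_of_nonneg_right posLog_nonneg
  · exact le_add_of_nonneg_left posLog_nonneg

lemma Nat.finite_setOf_primes_dvd {n : ℕ} (hn : n ≠ 0) : {p : Nat.Primes | p.1 ∣ n}.Finite :=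
  (n.divisors.finite_toSet.preimage Subtype.val_injective.injOn).subset
    fun _ hp => Nat.mem_divisors.2 ⟨hp, hn⟩

lemma Real.log_natCast_eq_sum_primes (n : ℕ) :
    log n = Finset.sum (ι := Nat.Primes) (n.primeFactors.subtype Nat.Prime)
      fun p => (n.factorization p : ℝ) * log p := by
  rw [log_nat_eq_sum_factorization, Finsupp.sum, Nat.support_factorization,
    ← Finset.sum_subtype_of_mem _ fun _ => Nat.prime_of_mem_primeFactors]
  rfl

lemma Rat.natAbs_num_eq_abs_mul_den (s : ℚ) : (s.num.natAbs : ℝ) = |(s : ℝ)| * s.den := by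
  have hd : (0 : ℝ) < s.den := mod_cast s.den_pos
  rw [Rat.cast_def, abs_div, abs_of_pos hd, div_mul_cancel₀ _ hd.ne', Nat.cast_natAbs,
    Int.cast_abs]

lemma Padic.norm_ratCast_of_dvd_den {p : ℕ} [hp : Fact p.Prime] {q : ℚ} (h : p ∣ q.den) :
    ‖(q : ℚ_[p])‖ = (p : ℝ) ^ q.den.factorization p := by
  have hq : q ≠ 0 := by
    rintro rfl
    exact hp.1.one_lt.ne' (Nat.dvd_one.1 h)
  have hnum : ¬ (p : ℤ) ∣ q.num := fun hd =>
    hp.1.one_lt.ne' (Nat.dvd_one.1 (q.reduced ▸ Nat.dvd_gcd (Int.natCast_dvd.1 hd) h))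
  rw [Padic.eq_padicNorm, padicNorm.eq_zpow_of_nonzero hq, padicValRat_def,
    padicValInt.eq_zero_of_not_dvd hnum, Nat.factorization_def _ hp.1]
  push_cast
  simp

lemma log_den_le_tsum {q : ℚ} {f : Nat.Primes → ℝ} (hf : Summable f)
    (hq : ∀ p : Nat.Primes, log⁺ ‖(q : ℚ_[p.1])‖ ≤ f p) : log q.den ≤ ∑' p, f p := by
  have hf0 : ∀ p, 0 ≤ f p := fun p => posLog_nonneg.trans (hq p)
  rw [log_natCast_eq_sum_primes]
  refine (Finset.sum_le_sum fun p hp => ?_).trans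
    (Summable.sum_le_tsum _ (fun p _ => hf0 p) hf)
  have hdvd : p.1 ∣ q.den := Nat.dvd_of_mem_primeFactors (Finset.mem_subtype.1 hp)
  calc (q.den.factorization p : ℝ) * log p = log ‖(q : ℚ_[p.1])‖ := by
        rw [Padic.norm_ratCast_of_dvd_den hdvd, log_pow]
    _ ≤ log⁺ ‖(q : ℚ_[p.1])‖ := le_max_right _ _
    _ ≤ f p := hq p

def IsFiniteAdele (z : (p : Nat.Primes) → ℚ_[p.1]) : Prop :=
  {p : Nat.Primes | 1 < ‖z p‖}.Finite

namespace IsFiniteAdele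

variable {z w : (p : Nat.Primes) → ℚ_[p.1]}

lemma ratCast (r : ℚ) : IsFiniteAdele fun p => (r : ℚ_[p.1]) :=
  (Nat.finite_setOf_primes_dvd r.den_nz).subset fun _ hp =>
    not_not.1 fun h => (Padic.norm_rat_le_one h).not_gt hp

lemma mul (hz : IsFiniteAdele z) (hw : IsFiniteAdele w) : IsFiniteAdele fun p => z p * w p :=
  (hz.union hw).subset fun p hp => by
    by_contra! h
    simp only [Set.mem_union, Set.mem_ofPred_eq, not_or, not_lt] at h
    exact hp.not_ge (norm_mul (z p) (w p) ▸ mul_le_one₀ h.1 (norm_nonneg _) h.2)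

lemma sub (hz : IsFiniteAdele z) (hw : IsFiniteAdele w) : IsFiniteAdele fun p => z p - w p :=
  (hz.union hw).subset fun p hp => by
    by_contra! h
    simp only [Set.mem_union, Set.mem_ofPred_eq, not_or, not_lt] at h
    exact hp.not_ge ((IsUltrametricDist.norm_sub_le_max _ _).trans (max_le h.1 h.2))

lemma summable_posLog (hz : IsFiniteAdele z) : Summable fun p => log⁺ ‖z p‖ :=
  summable_of_ne_finset_zero (s := hz.toFinset) fun p hp => by
    simpa [posLog_eq_zero_iff] using hz.mem_toFinset.not.1 hp

end IsFiniteAdele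

lemma summable_abs_log_norm_ratCast (q : ℚ) :
    Summable fun p : Nat.Primes => |log ‖(q : ℚ_[p.1])‖| := by
  convert (IsFiniteAdele.ratCast q).summable_posLog.add
    (IsFiniteAdele.ratCast q⁻¹).summable_posLog using 2 with p
  rw [Rat.cast_inv, norm_inv, abs_log_eq_posLog_add_posLog_inv]

lemma nad_eq_tsum (q : ℚ) : nad q = ∑' p : Nat.Primes, |log ‖(q : ℚ_[p.1])‖| := by
  simp only [nad, Padic.eq_padicNorm]

lemma nad_nonneg (q : ℚ) : 0 ≤ nad q :=
  tsum_nonneg fun _ => abs_nonneg _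

lemma nad_inv (q : ℚ) : nad q⁻¹ = nad q := by
  simp only [nad_eq_tsum, Rat.cast_inv, norm_inv, log_inv, abs_neg]

lemma log_den_le_nad (q : ℚ) : log q.den ≤ nad q :=
  nad_eq_tsum q ▸ log_den_le_tsum (summable_abs_log_norm_ratCast q) fun p => by
    rw [abs_log_eq_posLog_add_posLog_inv]
    exact le_add_of_nonneg_right posLog_nonneg

lemma log_natAbs_num_le_nad (q : ℚ) : log q.num.natAbs ≤ nad q := by
  rcases eq_or_ne q 0 with rfl | hq
  · simpa using nad_nonneg 0
  simpa [Rat.den_inv_of_ne_zero hq, nad_inv] using log_den_le_nad q⁻¹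

section adeleHeight

variable (z : (p : Nat.Primes) → ℚ_[p.1]) (zinf : ℝ)

lemma adeleHeight_eq : adeleHeight z zinf = ∑' p, log⁺ ‖z p‖ + log⁺ zinf := by
  simp only [adeleHeight, posLog_apply, max_comm (0 : ℝ), log_abs]

lemma tsum_posLog_le_adeleHeight : ∑' p, log⁺ ‖z p‖ ≤ adeleHeight z zinf :=
  adeleHeight_eq z zinf ▸ le_add_of_nonneg_right posLog_nonneg

lemma posLog_le_adeleHeight : log⁺ zinf ≤ adeleHeight z zinf :=
  adeleHeight_eq z zinf ▸ le_add_of_nonneg_left (tsum_nonneg fun _ => posLog_nonneg)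

lemma adeleHeight_nonneg : 0 ≤ adeleHeight z zinf :=
  posLog_nonneg.trans (posLog_le_adeleHeight z zinf)

end adeleHeight

def ratBox (B D : ℝ) : Set ℚ := {s | (s.num.natAbs : ℝ) ≤ B ∧ (s.den : ℝ) ≤ D}

lemma ratBox_subset (B D : ℝ) :
    ratBox B D ⊆ ((Finset.Icc (-⌊B⌋₊ : ℤ) ⌊B⌋₊ ×ˢ Finset.Icc 1 ⌊D⌋₊).image
      fun x => (x.1 / x.2 : ℚ) : Set ℚ) := by
  rintro s ⟨hnum, hden⟩
  refine Finset.mem_image.2 ⟨(s.num, s.den), ?_, Rat.num_div_den s⟩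
  have hnum' : s.num.natAbs ≤ ⌊B⌋₊ := Nat.le_floor hnum
  simp only [Finset.mem_product, Finset.mem_Icc]
  exact ⟨by omega, s.den_pos, Nat.le_floor hden⟩

lemma ratBox_finite (B D : ℝ) : (ratBox B D).Finite :=
  (Finset.finite_toSet _).subset (ratBox_subset B D)

lemma ncard_ratBox_le {B D : ℝ} (hB : 0 ≤ B) (hD : 0 ≤ D) :
    ((ratBox B D).ncard : ℝ) ≤ (2 * B + 1) * D := by
  have hcard : (ratBox B D).ncard ≤ (2 * ⌊B⌋₊ + 1) * ⌊D⌋₊ := by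
    refine (Set.ncard_le_ncard (ratBox_subset B D) (Finset.finite_toSet _)).trans ?_
    rw [Set.ncard_coe_finset]
    refine Finset.card_image_le.trans_eq ?_
    rw [Finset.card_product, Int.card_Icc, Nat.card_Icc, Nat.add_sub_cancel]
    congr 1
    omega
  calc ((ratBox B D).ncard : ℝ) ≤ (2 * ⌊B⌋₊ + 1) * ⌊D⌋₊ := mod_cast hcard
    _ ≤ (2 * B + 1) * D := by gcongr; exacts [Nat.floor_le hB, Nat.floor_le hD]

lemma mem_ratBox_of_eq_sub {u v : (p : Nat.Primes) → ℚ_[p.1]} {uinf vinf k : ℝ}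
    (hu : IsFiniteAdele u) (hv : IsFiniteAdele v)
    (hku : adeleHeight u uinf ≤ k) (hkv : adeleHeight v vinf ≤ k) {s : ℚ}
    (hs : ∀ p : Nat.Primes, (s : ℚ_[p.1]) = u p - v p) (hsinf : (s : ℝ) = uinf - vinf) :
    s ∈ ratBox (2 * exp k ^ 3) (exp k ^ 2) := by
  have hden : (s.den : ℝ) ≤ exp k ^ 2 := by
    have hlog : log s.den ≤ k + k := by
      refine (log_den_le_tsum (hu.summable_posLog.add hv.summable_posLog) fun p =>
        hs p ▸ IsUltrametricDist.posLog_norm_sub_le _ _).trans ?_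
      rw [hu.summable_posLog.tsum_add hv.summable_posLog]
      exact add_le_add ((tsum_posLog_le_adeleHeight u uinf).trans hku)
        ((tsum_posLog_le_adeleHeight v vinf).trans hkv)
    simpa [exp_add, sq] using le_exp_of_log_le hlog
  have habs_le {x : ℝ} (hx : log⁺ x ≤ k) : |x| ≤ exp k :=
    le_exp_of_log_le ((log_abs x).trans_le (le_max_right _ _) |>.trans hx)
  have habs : |(s : ℝ)| ≤ 2 * exp k := by
    rw [hsinf, two_mul]
    exact (abs_sub _ _).trans (add_le_add
      (habs_le ((posLog_le_adeleHeight u uinf).trans hku))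
      (habs_le ((posLog_le_adeleHeight v vinf).trans hkv)))
  refine ⟨?_, hden⟩
  rw [Rat.natAbs_num_eq_abs_mul_den, pow_succ' _ 2, ← mul_assoc]
  gcongr

def gaugeSet (ya : ℚ) (zfin : (p : Nat.Primes) → ℚ_[p.1]) (zinf k : ℝ) : Set (ℚ × ℚ) :=
  {g | g.1 ≠ 0 ∧ gaugeLength g.1 g.2 ya zfin zinf ≤ k}

section gaugeSet

variable {ya : ℚ} {zfin : (p : Nat.Primes) → ℚ_[p.1]} {zinf k : ℝ} {a b : ℚ}

lemma inv_mul_mem_ratBox (hg : (a, b) ∈ gaugeSet ya zfin zinf k) :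
    a⁻¹ * ya ∈ ratBox (exp k) (exp k) := by
  have hnad : nad (a⁻¹ * ya) ≤ k := (le_add_of_nonneg_right (adeleHeight_nonneg _ _)).trans hg.2
  exact ⟨le_exp_of_log_le ((log_natAbs_num_le_nad _).trans hnad),
    le_exp_of_log_le ((log_den_le_nad _).trans hnad)⟩

lemma sub_mem_ratBox (hz : IsFiniteAdele zfin) {b' : ℚ}
    (hg : (a, b) ∈ gaugeSet ya zfin zinf k) (hg' : (a, b') ∈ gaugeSet ya zfin zinf k) :
    a⁻¹ * b - a⁻¹ * b' ∈ ratBox (2 * exp k ^ 3) (exp k ^ 2) := by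
  have hadele (c : ℚ) :
      IsFiniteAdele fun p => ((a⁻¹ : ℚ) : ℚ_[p.1]) * zfin p - ((a⁻¹ * c : ℚ) : ℚ_[p.1]) :=
    ((IsFiniteAdele.ratCast _).mul hz).sub (IsFiniteAdele.ratCast _)
  exact mem_ratBox_of_eq_sub (hadele b') (hadele b)
    ((le_add_of_nonneg_left (nad_nonneg _)).trans hg'.2)
    ((le_add_of_nonneg_left (nad_nonneg _)).trans hg.2)
    (fun p => by push_cast; ring) (by push_cast; ring)

lemma gaugeSet_finite_and_ncard_le (hya : ya ≠ 0) (hz : IsFiniteAdele zfin) :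
    (gaugeSet ya zfin zinf k).Finite ∧ (gaugeSet ya zfin zinf k).ncard ≤
      (ratBox (exp k) (exp k)).ncard * (ratBox (2 * exp k ^ 3) (exp k ^ 2)).ncard := by
  set S := gaugeSet ya zfin zinf k
  let c : ℚ → ℚ := fun a => Classical.epsilon fun b => (a, b) ∈ S
  have hc (g : ℚ × ℚ) (hg : g ∈ S) : (g.1, c g.1) ∈ S :=
    Classical.epsilon_spec (p := fun b => (g.1, b) ∈ S) ⟨g.2, hg⟩
  let Φ : ℚ × ℚ → ℚ × ℚ := fun g => (g.1⁻¹ * ya, g.1⁻¹ * g.2 - g.1⁻¹ * c g.1)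
  have hmaps : Set.MapsTo Φ S (ratBox (exp k) (exp k) ×ˢ ratBox (2 * exp k ^ 3) (exp k ^ 2)) :=
    fun g hg => ⟨inv_mul_mem_ratBox hg, sub_mem_ratBox hz hg (hc g hg)⟩
  have hinj : Set.InjOn Φ S := by
    rintro ⟨a, b⟩ hg ⟨a', b'⟩ - h
    simp only [Φ, Prod.mk.injEq] at h
    obtain rfl : a = a' := inv_injective (mul_right_cancel₀ hya h.1)
    simpa [hg.1] using h.2
  have hfin : (ratBox (exp k) (exp k) ×ˢ ratBox (2 * exp k ^ 3) (exp k ^ 2)).Finite :=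
    (ratBox_finite _ _).prod (ratBox_finite _ _)
  exact ⟨hfin.of_injOn hmaps hinj,
    Set.ncard_prod ▸ Set.ncard_le_ncard_of_injOn Φ hmaps hinj hfin⟩

end gaugeSet

lemma ratBox_count_le_exp {k : ℝ} (hk : 0 ≤ k) :
    (2 * exp k + 1) * exp k * ((2 * (2 * exp k ^ 3) + 1) * exp k ^ 2) ≤ exp (7 * (k + 1)) := by
  have hE : 1 ≤ exp k := one_le_exp hk
  have he : 2 ≤ exp 1 := by linarith [add_one_le_exp (1 : ℝ)]
  calc (2 * exp k + 1) * exp k * ((2 * (2 * exp k ^ 3) + 1) * exp k ^ 2)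
      ≤ 3 * exp k * exp k * (5 * exp k ^ 3 * exp k ^ 2) := by
        gcongr
        · linarith
        · nlinarith [one_le_pow₀ (n := 3) hE]
    _ = 15 * exp k ^ 7 := by ring
    _ ≤ exp 1 ^ 7 * exp k ^ 7 := by gcongr; nlinarith [pow_le_pow_left₀ zero_le_two he 7]
    _ = exp (7 * (k + 1)) := by rw [← mul_pow, ← exp_add, ← exp_nat_mul]; ring_nf

/-- There is a constant `C > 0` such that for every
`y = (ya, z) ∈ H = ℚ* × 𝔸` (where the adele `z` is a family `(z_p)_p` with
`|z_p|_p ≤ 1` for all but finitely many primes, together with a real component) and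
every real `k ≥ 0`, the gauge set `𝒢_k^y = {g ∈ ℚ* × ℚ : ‖g⁻¹y‖ ≤ k}` is finite with
cardinality at most `e^{C(k+1)}`. -/
theorem statement13 :
    ∃ C : ℝ, 0 < C ∧
      ∀ (ya : ℚ), ya ≠ 0 →
      ∀ (zfin : (p : Nat.Primes) → ℚ_[p.1]) (zinf : ℝ),
        {p : Nat.Primes | 1 < ‖zfin p‖}.Finite →
      ∀ k : ℝ, 0 ≤ k →
        {g : ℚ × ℚ | g.1 ≠ 0 ∧ gaugeLength g.1 g.2 ya zfin zinf ≤ k}.Finite ∧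
          (({g : ℚ × ℚ | g.1 ≠ 0 ∧ gaugeLength g.1 g.2 ya zfin zinf ≤ k}.ncard : ℝ) ≤
            Real.exp (C * (k + 1))) := by
  refine ⟨7, by norm_num, fun ya hya zfin zinf hz k hk => ?_⟩
  obtain ⟨hfin, hcard⟩ := gaugeSet_finite_and_ncard_le (zinf := zinf) (k := k) hya hz
  refine ⟨hfin, ?_⟩
  calc ((gaugeSet ya zfin zinf k).ncard : ℝ)
      ≤ (ratBox (exp k) (exp k)).ncard * (ratBox (2 * exp k ^ 3) (exp k ^ 2)).ncard :=
        mod_cast hcard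
    _ ≤ (2 * exp k + 1) * exp k * ((2 * (2 * exp k ^ 3) + 1) * exp k ^ 2) := by
        gcongr <;> exact ncard_ratBox_le (by positivity) (by positivity)
    _ ≤ exp (7 * (k + 1)) := ratBox_count_le_exp hk
end

section
/- Assume Σ_{p prime} E[|log|a₁|_p|] < ∞, and set φ_p = E[log|a₁|_p] for each prime p. For n ≥ 1 define the rational number q_n := ∏_{p prime} p^{−⌊n φ_p / log p⌋} (a well-defined finite product, since ⌊n φ_p / log p⌋ = 0 for all but finitely many primes p). Then (1/n)·E[⟨A_n^{-1} q_n⟩] → 0 as n → ∞; that is, ⟨A_n^{-1} q_n⟩/n converges to zero in L¹. -/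
/-! For a prime `p`, the `p`-th summand of `⟨A_n⁻¹ q_n⟩` is `|S_n(p) - m_n(p) log p|`, where
`S_n(p) = Σ_{k<n} log |a_k|_p` and `m_n(p)` is the integer part of `n φ_p / log p`, so that
`m_n(p) log p` lies within `log p` of `n φ_p = E[S_n(p)]`. The `L¹` law of large numbers thus makes
the expectation of each summand `o(n)`, while it is at most `2 n E|log |a₁|_p|`, which is summable
over `p`; dominated convergence for series lets the limit pass through the sum over primes. -/

open MeasureTheory ProbabilityTheory Filter Topology

/-- The integer part of a real number (truncation towards zero). -/
noncomputable def intPart (x : ℝ) : ℤ := if 0 ≤ x then ⌊x⌋ else -⌊-x⌋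

lemma abs_intPart_sub_le (x : ℝ) : |(intPart x : ℝ) - x| ≤ 1 := by
  unfold intPart
  split_ifs
  · rw [abs_le]; constructor <;> linarith [Int.floor_le x, Int.lt_floor_add_one x]
  · rw [abs_le]; push_cast
    constructor <;> linarith [Int.floor_le (-x), Int.lt_floor_add_one (-x)]

lemma abs_intPart_le (x : ℝ) : |(intPart x : ℝ)| ≤ |x| := by
  unfold intPart
  split_ifs with hx
  · rw [abs_of_nonneg hx, abs_of_nonneg (by exact_mod_cast Int.floor_nonneg.2 hx)]
    exact Int.floor_le x
  · rw [not_le] at hx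
    rw [Int.cast_neg, abs_neg, abs_of_neg hx,
      abs_of_nonneg (by exact_mod_cast Int.floor_nonneg.2 (neg_nonneg.2 hx.le))]
    exact Int.floor_le (-x)

lemma intPart_eq_zero_of_abs_lt_one {x : ℝ} (hx : |x| < 1) : intPart x = 0 :=
  Int.abs_lt_one_iff.1 (by exact_mod_cast (abs_intPart_le x).trans_lt hx)

lemma abs_intPart_div_mul_sub_le {y L : ℝ} (hL : 0 < L) : |intPart (y / L) * L - y| ≤ L :=
  calc |intPart (y / L) * L - y| = |((intPart (y / L) : ℝ) - y / L) * L| := by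
        rw [sub_mul, div_mul_cancel₀ y hL.ne']
    _ = |(intPart (y / L) : ℝ) - y / L| * L := by rw [abs_mul, abs_of_pos hL]
    _ ≤ 1 * L := mul_le_mul_of_nonneg_right (abs_intPart_sub_le _) hL.le
    _ = L := one_mul L

lemma abs_intPart_div_mul_le {y L : ℝ} (hL : 0 < L) : |intPart (y / L) * L| ≤ |y| :=
  calc |intPart (y / L) * L| ≤ |y / L| * L := by
        rw [abs_mul, abs_of_pos hL]; exact mul_le_mul_of_nonneg_right (abs_intPart_le _) hL.le
    _ = |y| := by rw [abs_div, abs_of_pos hL, div_mul_cancel₀ _ hL.ne']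

lemma finite_support_intPart_div_log {φ : Nat.Primes → ℝ} (hφ : Tendsto φ cofinite (𝓝 0))
    (t : ℝ) : (Function.support fun ℓ : Nat.Primes => intPart (t * φ ℓ / Real.log ℓ)).Finite := by
  have hsmall : ∀ᶠ ℓ in cofinite, |t * φ ℓ| < Real.log 2 := by
    have htφ := hφ.const_mul t
    rw [mul_zero] at htφ
    simpa only [Real.dist_eq, sub_zero] using
      Metric.tendsto_nhds.1 htφ _ (Real.log_pos one_lt_two)
  refine (eventually_cofinite.1 hsmall).subset fun ℓ hℓ hlt => hℓ ?_
  have hlog : Real.log 2 ≤ Real.log ℓ :=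
    Real.log_le_log two_pos (by exact_mod_cast ℓ.2.two_le)
  have hlogpos : 0 < Real.log ℓ := (Real.log_pos one_lt_two).trans_le hlog
  refine intPart_eq_zero_of_abs_lt_one ?_
  rw [abs_div, abs_of_pos hlogpos, div_lt_one hlogpos]
  exact hlt.trans_le hlog

section padicNorm

variable {p : ℕ} [Fact p.Prime]

lemma log_padicNorm_inv (x : ℚ) :
    Real.log (padicNorm p x⁻¹) = -Real.log (padicNorm p x) := by
  rw [IsAbsoluteValue.abv_inv (padicNorm p), Rat.cast_inv, Real.log_inv]

lemma log_padicNorm_mul {x y : ℚ} (hx : x ≠ 0) (hy : y ≠ 0) :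
    Real.log (padicNorm p (x * y)) = Real.log (padicNorm p x) + Real.log (padicNorm p y) := by
  rw [padicNorm.mul, Rat.cast_mul, Real.log_mul] <;> exact_mod_cast padicNorm.nonzero ‹_›

lemma log_padicNorm_prod {ι : Type*} {s : Finset ι} {f : ι → ℚ} (hf : ∀ i ∈ s, f i ≠ 0) :
    Real.log (padicNorm p (∏ i ∈ s, f i)) = ∑ i ∈ s, Real.log (padicNorm p (f i)) := by
  have hprod : padicNorm p (∏ i ∈ s, f i) = ∏ i ∈ s, padicNorm p (f i) :=
    map_prod (IsAbsoluteValue.abvHom (padicNorm p)) f s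
  rw [hprod, Rat.cast_prod, Real.log_prod]
  exact fun i hi => by exact_mod_cast padicNorm.nonzero (hf i hi)

lemma log_padicNorm_prod_inv_mul {ι : Type*} {s : Finset ι} {f : ι → ℚ}
    (hf : ∀ i ∈ s, f i ≠ 0) {y : ℚ} (hy : y ≠ 0) :
    Real.log (padicNorm p ((∏ i ∈ s, f i)⁻¹ * y))
      = Real.log (padicNorm p y) - ∑ i ∈ s, Real.log (padicNorm p (f i)) := by
  rw [log_padicNorm_mul (inv_ne_zero (Finset.prod_ne_zero_iff.2 hf)) hy, log_padicNorm_inv,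
    log_padicNorm_prod hf, neg_add_eq_sub]

end padicNorm

instance Nat.Primes.fact_prime (p : Nat.Primes) : Fact p.1.Prime := ⟨p.2⟩

lemma padicNorm_finprod_zpow (e : Nat.Primes → ℤ) (he : (Function.support e).Finite)
    (p : Nat.Primes) :
    padicNorm p (∏ᶠ ℓ : Nat.Primes, (ℓ : ℚ) ^ (-e ℓ)) = (p : ℚ) ^ e p := by
  let N : ℚ →*₀ ℚ := IsAbsoluteValue.abvHom (padicNorm p)
  have hfin : (Function.mulSupport fun ℓ : Nat.Primes => (ℓ : ℚ) ^ (-e ℓ)).Finite :=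
    he.subset fun ℓ hℓ h0 => hℓ (by simp [h0])
  have hN : ∀ ℓ : Nat.Primes, N ((ℓ : ℚ) ^ (-e ℓ)) = padicNorm p ℓ ^ (-e ℓ) := fun ℓ =>
    map_zpow₀ N _ _
  calc padicNorm p (∏ᶠ ℓ : Nat.Primes, (ℓ : ℚ) ^ (-e ℓ))
      = ∏ᶠ ℓ : Nat.Primes, N ((ℓ : ℚ) ^ (-e ℓ)) := (N : ℚ →* ℚ).map_finprod hfin
    _ = N ((p : ℚ) ^ (-e p)) := finprod_eq_single _ p fun ℓ hℓ => by
        rw [hN, padicNorm.padicNorm_of_prime_of_ne (fun h => hℓ (Subtype.ext h.symm)), one_zpow]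
    _ = (p : ℚ) ^ e p := by
        rw [hN, padicNorm.padicNorm_p_of_prime, inv_zpow', neg_neg]

lemma log_padicNorm_finprod_intPart {φ : Nat.Primes → ℝ} (hφ : Tendsto φ cofinite (𝓝 0))
    (t : ℝ) (p : Nat.Primes) :
    Real.log (padicNorm p (∏ᶠ ℓ : Nat.Primes, (ℓ : ℚ) ^ (-intPart (t * φ ℓ / Real.log ℓ))))
      = intPart (t * φ p / Real.log p) * Real.log p := by
  rw [padicNorm_finprod_zpow _ (finite_support_intPart_div_log hφ t), Rat.cast_zpow,
    Rat.cast_natCast, Real.log_zpow]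

section LawOfLargeNumbers

variable {Ω : Type*} [MeasurableSpace Ω] {μ : Measure Ω} {X : ℕ → Ω → ℝ}

lemma tendsto_integral_abs_inv_mul_sum_sub (hint : Integrable (X 0) μ)
    (hindep : Pairwise (Function.onFun (IndepFun · · μ) X))
    (hident : ∀ i, IdentDistrib (X i) (X 0) μ μ) :
    Tendsto (fun n : ℕ => ∫ ω, |(n : ℝ)⁻¹ * ∑ k ∈ Finset.range n, X k ω - μ[X 0]| ∂μ)
      atTop (𝓝 0) := by
  have hmeas : ∀ n : ℕ, AEStronglyMeasurable
      (fun ω => (n : ℝ)⁻¹ • ∑ k ∈ Finset.range n, X k ω - μ[X 0]) μ := fun n => by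
    have hX := fun k => ((hident k).integrable_iff.2 hint).aestronglyMeasurable
    fun_prop
  have hlaw := strong_law_Lp le_rfl ENNReal.one_ne_top X (memLp_one_iff_integrable.2 hint)
    hindep hident
  have hlaw' := (ENNReal.tendsto_toReal ENNReal.zero_ne_top).comp hlaw
  rw [ENNReal.toReal_zero] at hlaw'
  refine hlaw'.congr fun n => ?_
  rw [Function.comp_apply, toReal_eLpNorm (hmeas n), lpNorm_one_eq_integral_norm (hmeas n)]
  rfl

variable [IsProbabilityMeasure μ]

lemma integral_abs_sum_sub_le (hint : Integrable (X 0) μ)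
    (hident : ∀ i, IdentDistrib (X i) (X 0) μ μ) (n : ℕ) (r : ℝ) :
    ∫ ω, |∑ k ∈ Finset.range n, X k ω - r| ∂μ ≤ n * ∫ ω, |X 0 ω| ∂μ + |r| := by
  have hint' : ∀ k, Integrable (fun ω => |X k ω|) μ := fun k =>
    ((hident k).integrable_iff.2 hint).abs
  calc ∫ ω, |∑ k ∈ Finset.range n, X k ω - r| ∂μ
      ≤ ∫ ω, (∑ k ∈ Finset.range n, |X k ω| + |r|) ∂μ := by
        refine integral_mono_of_nonneg (.of_forall fun ω => abs_nonneg _)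
          ((integrable_finsetSum _ fun k _ => hint' k).add (integrable_const _))
          (.of_forall fun ω => ?_)
        dsimp only
        grw [abs_sub, Finset.abs_sum_le_sum_abs]
    _ = n * ∫ ω, |X 0 ω| ∂μ + |r| := by
        rw [integral_add (integrable_finsetSum _ fun k _ => hint' k) (integrable_const _),
          integral_finsetSum _ fun k _ => hint' k]
        have hk : ∀ k, ∫ ω, |X k ω| ∂μ = ∫ ω, |X 0 ω| ∂μ := fun k =>
          ((hident k).comp continuous_abs.measurable).integral_eq
        simp [hk]

lemma tendsto_integral_abs_sum_sub_div (hint : Integrable (X 0) μ)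
    (hindep : Pairwise (Function.onFun (IndepFun · · μ) X))
    (hident : ∀ i, IdentDistrib (X i) (X 0) μ μ) {r : ℕ → ℝ} {K : ℝ}
    (hr : ∀ n : ℕ, |r n - n * μ[X 0]| ≤ K) :
    Tendsto (fun n : ℕ => (∫ ω, |∑ k ∈ Finset.range n, X k ω - r n| ∂μ) / n) atTop (𝓝 0) := by
  have hlim : Tendsto (fun n : ℕ =>
      ∫ ω, |(n : ℝ)⁻¹ * ∑ k ∈ Finset.range n, X k ω - μ[X 0]| ∂μ + K / n) atTop (𝓝 0) := by
    simpa using (tendsto_integral_abs_inv_mul_sum_sub hint hindep hident).add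
      (tendsto_const_div_atTop_nhds_zero_nat K)
  refine tendsto_of_tendsto_of_tendsto_of_le_of_le' tendsto_const_nhds hlim
    (.of_forall fun n => by positivity) ?_
  filter_upwards [eventually_ge_atTop 1] with n hn
  have hn : (0 : ℝ) < n := by exact_mod_cast hn
  have hint' : Integrable (fun ω => |(n : ℝ)⁻¹ * ∑ k ∈ Finset.range n, X k ω - μ[X 0]|) μ :=
    (((integrable_finsetSum _ fun k _ => (hident k).integrable_iff.2 hint).const_mul _).sub
      (integrable_const _)).abs
  rw [div_le_iff₀ hn, add_mul, div_mul_cancel₀ _ hn.ne', mul_comm, ← integral_const_mul]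
  calc ∫ ω, |∑ k ∈ Finset.range n, X k ω - r n| ∂μ
      ≤ ∫ ω, ((n : ℝ) * |(n : ℝ)⁻¹ * ∑ k ∈ Finset.range n, X k ω - μ[X 0]| + K) ∂μ := by
        refine integral_mono_of_nonneg (.of_forall fun ω => abs_nonneg _)
          ((hint'.const_mul _).add (integrable_const _)) (.of_forall fun ω => ?_)
        have hsplit : ∑ k ∈ Finset.range n, X k ω - r n
            = n * ((n : ℝ)⁻¹ * ∑ k ∈ Finset.range n, X k ω - μ[X 0]) - (r n - n * μ[X 0]) := by
          field_simp; ring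
        dsimp only
        rw [hsplit]
        refine (abs_sub _ _).trans (add_le_add (le_of_eq ?_) (hr n))
        rw [abs_mul, abs_of_pos hn]
    _ = ∫ ω, (n : ℝ) * |(n : ℝ)⁻¹ * ∑ k ∈ Finset.range n, X k ω - μ[X 0]| ∂μ + K := by
        rw [integral_add (hint'.const_mul _) (integrable_const _)]
        simp

end LawOfLargeNumbers

lemma tendsto_integral_tsum_div_of_le {Ω ι : Type*} [MeasurableSpace Ω] {μ : Measure Ω}
    [Countable ι] {F : ι → ℕ → Ω → ℝ} {C : ι → ℝ} (hC : Summable C)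
    (hnonneg : ∀ i n ω, 0 ≤ F i n ω) (hint : ∀ i n, Integrable (F i n) μ)
    (hbound : ∀ i n, ∫ ω, F i n ω ∂μ ≤ n * C i)
    (hlim : ∀ i, Tendsto (fun n : ℕ => (∫ ω, F i n ω ∂μ) / n) atTop (𝓝 0)) :
    Tendsto (fun n : ℕ => (∫ ω, ∑' i, F i n ω ∂μ) / n) atTop (𝓝 0) := by
  have hnorm : ∀ i n, ∫ ω, ‖F i n ω‖ ∂μ = ∫ ω, F i n ω ∂μ := fun i n =>
    integral_congr_ae (.of_forall fun ω => Real.norm_of_nonneg (hnonneg i n ω))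
  have hC0 : ∀ i, 0 ≤ C i := fun i => by
    simpa using (integral_nonneg (hnonneg i 1)).trans (hbound i 1)
  have hdiv : ∀ i n, (∫ ω, F i n ω ∂μ) / n ≤ C i := fun i n => by
    rcases n.eq_zero_or_pos with rfl | hn
    · simpa using hC0 i
    · exact (div_le_iff₀ (by exact_mod_cast hn)).2 ((hbound i n).trans_eq (mul_comm _ _))
  have hswap : ∀ n : ℕ, ∫ ω, ∑' i, F i n ω ∂μ = ∑' i, ∫ ω, F i n ω ∂μ := fun n =>
    (integral_tsum_of_summable_integral_norm (hint · n) <|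
      (hC.mul_left (n : ℝ)).of_nonneg_of_le (fun i => integral_nonneg fun ω => norm_nonneg _)
        fun i => (hnorm i n).trans_le (hbound i n)).symm
  simp_rw [hswap, ← tsum_div_const]
  simpa using tendsto_tsum_of_dominated_convergence hC hlim
    (.of_forall fun n i => by
      rw [Real.norm_of_nonneg (div_nonneg (integral_nonneg (hnonneg i n)) n.cast_nonneg)]
      exact hdiv i n)

lemma tendsto_integral_tsum_abs_sum_sub_div {Ω ι : Type*} [MeasurableSpace Ω] {μ : Measure Ω}
    [IsProbabilityMeasure μ] [Countable ι] {X : ι → ℕ → Ω → ℝ} {r : ι → ℕ → ℝ} {K : ι → ℝ}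
    (hint : ∀ i, Integrable (X i 0) μ)
    (hindep : ∀ i, Pairwise (Function.onFun (IndepFun · · μ) (X i)))
    (hident : ∀ i k, IdentDistrib (X i k) (X i 0) μ μ)
    (hsum : Summable fun i => ∫ ω, |X i 0 ω| ∂μ)
    (hr : ∀ i n, |r i n - n * μ[X i 0]| ≤ K i) (hr_le : ∀ i n, |r i n| ≤ n * ∫ ω, |X i 0 ω| ∂μ) :
    Tendsto (fun n : ℕ => (∫ ω, ∑' i, |∑ k ∈ Finset.range n, X i k ω - r i n| ∂μ) / n)
      atTop (𝓝 0) :=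
  tendsto_integral_tsum_div_of_le (hsum.mul_left 2) (fun _ _ _ => abs_nonneg _)
    (fun i n => ((integrable_finsetSum _ fun k _ => (hident i k).integrable_iff.2 (hint i)).sub
      (integrable_const _)).abs)
    (fun i n => by linarith [integral_abs_sum_sub_le (hint i) (hident i) n (r i n), hr_le i n])
    fun i => tendsto_integral_abs_sum_sub_div (hint i) (hindep i) (hident i) (hr i)

theorem statement14_general
    {Ω : Type*} [MeasureSpace Ω] [IsProbabilityMeasure (ℙ : Measure Ω)]
    (a b : ℕ → Ω → ℚ)
    (hindep : iIndepFun (fun n ω => (a n ω, b n ω)) ℙ)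
    (hident : ∀ n, IdentDistrib (fun ω => (a n ω, b n ω)) (fun ω => (a 0 ω, b 0 ω)) ℙ ℙ)
    (hne : ∀ n ω, a n ω ≠ 0)
    (hInt : ∀ p : Nat.Primes, Integrable (fun ω => Real.log (padicNorm p.1 (a 0 ω) : ℝ)) ℙ)
    (hSum : Summable fun p : Nat.Primes => ∫ ω, |Real.log (padicNorm p.1 (a 0 ω) : ℝ)| ∂ℙ)
    (φ : Nat.Primes → ℝ)
    (hφ : ∀ p, φ p = ∫ ω, Real.log (padicNorm p.1 (a 0 ω) : ℝ) ∂ℙ)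
    (q : ℕ → ℚ)
    (hq : ∀ n, q n = ∏ᶠ p : Nat.Primes, (p.1 : ℚ) ^ (-intPart (n * φ p / Real.log p.1))) :
    Tendsto (fun n : ℕ =>
        (∫ ω, nad ((∏ k ∈ Finset.range n, a k ω)⁻¹ * q n) ∂ℙ) / n)
      atTop (𝓝 0) := by
  set X : Nat.Primes → ℕ → Ω → ℝ := fun p k ω => Real.log (padicNorm p.1 (a k ω))
  set r : Nat.Primes → ℕ → ℝ := fun p n => intPart (n * φ p / Real.log p) * Real.log p
  have hlog : ∀ p : Nat.Primes, 0 < Real.log p := fun p =>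
    Real.log_pos (by exact_mod_cast p.2.one_lt)
  have hident' : ∀ p k, IdentDistrib (X p k) (X p 0) ℙ ℙ := fun p k =>
    (hident k).comp (u := fun z : ℚ × ℚ => Real.log (padicNorm p.1 z.1)) .of_discrete
  have hindep' : ∀ p, Pairwise (Function.onFun (IndepFun · · ℙ) (X p)) := fun p i j hij =>
    (hindep.comp _ fun _ => Measurable.of_discrete (f := fun z : ℚ × ℚ =>
      Real.log (padicNorm p.1 z.1))).indepFun hij
  have hφ_le : ∀ p, |φ p| ≤ ∫ ω, |X p 0 ω| ∂ℙ := fun p =>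
    (hφ p).symm ▸ abs_integral_le_integral_abs
  have hr : ∀ p n, |r p n - n * ∫ ω, X p 0 ω ∂ℙ| ≤ Real.log p := fun p n => by
    rw [← hφ p]; exact abs_intPart_div_mul_sub_le (hlog p)
  have hr_le : ∀ p n, |r p n| ≤ n * ∫ ω, |X p 0 ω| ∂ℙ := fun p n => calc
    |r p n| ≤ |n * φ p| := abs_intPart_div_mul_le (hlog p)
    _ ≤ n * ∫ ω, |X p 0 ω| ∂ℙ := by
      rw [abs_mul, Nat.abs_cast]; exact mul_le_mul_of_nonneg_left (hφ_le p) n.cast_nonneg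
  have hlog_q : ∀ n p, Real.log (padicNorm p.1 (q n)) = r p n := fun n p => by
    rw [hq]
    exact log_padicNorm_finprod_intPart (hSum.of_norm_bounded hφ_le).tendsto_cofinite_zero n p
  have hq_ne : ∀ n, q n ≠ 0 := fun n => (hq n).symm ▸
    finprod_ne_zero fun ℓ => zpow_ne_zero _ (Nat.cast_ne_zero.2 ℓ.2.ne_zero)
  have hsummand : ∀ p n ω, |Real.log (padicNorm p.1 ((∏ k ∈ Finset.range n, a k ω)⁻¹ * q n))|
      = |∑ k ∈ Finset.range n, X p k ω - r p n| := fun p n ω => by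
    rw [log_padicNorm_prod_inv_mul (fun k _ => hne k ω) (hq_ne n), hlog_q, abs_sub_comm]
  refine (tendsto_integral_tsum_abs_sum_sub_div hInt hindep' hident' hSum hr hr_le).congr
    fun n => ?_
  simp only [nad, hsummand]

/-- Let `(aₙ, bₙ)` be i.i.d. with values in `ℚ* × ℚ` and assume
`Σ_{p prime} E[|log |a₁|_p|] < ∞`; set `φ_p = E[log |a₁|_p]` and, for `n ≥ 1`,
`q_n = ∏_{p prime} p^{-[n φ_p / log p]}` (a well-defined finite product, expressed with
`finprod`, since `[n φ_p / log p] = 0` for all but finitely many `p`).  Then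
`E[⟨A_n⁻¹ q_n⟩]/n → 0`, i.e. `⟨A_n⁻¹ q_n⟩/n → 0` in `L¹`. -/
theorem statement14
    {Ω : Type*} [MeasureSpace Ω] [IsProbabilityMeasure (ℙ : Measure Ω)]
    (a b : ℕ → Ω → ℚ)
    (hmeas : ∀ n, Measurable fun ω => (a n ω, b n ω))
    (hindep : iIndepFun (fun n ω => (a n ω, b n ω)) ℙ)
    (hident : ∀ n, IdentDistrib (fun ω => (a n ω, b n ω)) (fun ω => (a 0 ω, b 0 ω)) ℙ ℙ)
    (hne : ∀ n ω, a n ω ≠ 0)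
    (hInt : ∀ p : Nat.Primes, Integrable (fun ω => Real.log (padicNorm p.1 (a 0 ω) : ℝ)) ℙ)
    (hSum : Summable fun p : Nat.Primes => ∫ ω, |Real.log (padicNorm p.1 (a 0 ω) : ℝ)| ∂ℙ)
    (φ : Nat.Primes → ℝ)
    (hφ : ∀ p, φ p = ∫ ω, Real.log (padicNorm p.1 (a 0 ω) : ℝ) ∂ℙ)
    (q : ℕ → ℚ)
    (hq : ∀ n, q n = ∏ᶠ p : Nat.Primes, (p.1 : ℚ) ^ (-intPart (n * φ p / Real.log p.1))) :
    Tendsto (fun n : ℕ =>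
        (∫ ω, nad ((∏ k ∈ Finset.range n, a k ω)⁻¹ * q n) ∂ℙ) / n)
      atTop (𝓝 0) :=
  statement14_general a b hindep hident hne hInt hSum φ hφ q hq
end
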